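/- arXiv:2005.09894 — 5 statements merged into one kernel-verified Lean document; each statement's English description precedes it below -/
import Mathlib

section
/- Let n ≥ 1 and λ ∈ ℝ \ {0}. Define P_λ(x,ρ) = π^{−n/2} (Γ((n−iλ)/2)/Γ(−iλ)) ρ^{(n−iλ)/2} (ρ² + |x|²)^{−(n−iλ)/2} for x ∈ ℝⁿ, ρ > 0, and φ_λ(x,ρ) = ∫_{ℝⁿ} P_λ(x−u,ρ) P_{−λ}(u,1) du (this integral converges absolutely). Then for all x, y ∈ ℝⁿ and all ρ, r > 0, φ_λ((x−y)/r, ρ/r) = ∫_{ℝⁿ} P_λ(x−u,ρ) P_{−λ}(y−u,r) du. (In other words, the spherical function φ_λ satisfies φ_λ((y,r)^{−1}(x,ρ)) = ∫ P_λ(x−u,ρ) P_{−λ}(y−u,r) du for the group law (x,r)(x',r') = (x+rx', rr') on ℝⁿ × ℝ₊.) -/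
/-! |P_λ(x, ρ)| is a constant times (ρ² + |x|²)^{-n/2} ≲ (1 + |x|)^{-n}, so by Peetre's inequality
the integrand is O((1 + |u|)^{-2n}), which is integrable as n < 2n. The identity is the
substitution u = y + r w: the kernel is homogeneous, P_λ(r x, r ρ) = r^{-(n-iλ)/2} P_λ(x, ρ), and
the factors for λ and -λ multiply to r^{-n}, cancelling the Jacobian r^n. -/

open MeasureTheory Complex

/-- The generalized Poisson kernel
`P_λ(x,ρ) = π^{−n/2} (Γ((n−iλ)/2)/Γ(−iλ)) ρ^{(n−iλ)/2} (ρ²+|x|²)^{−(n−iλ)/2}`. -/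
noncomputable def Pker (n : ℕ) (lam : ℝ) (x : Fin n → ℝ) (ρ : ℝ) : ℂ :=
  ((Real.pi ^ (-(n : ℝ) / 2) : ℝ) : ℂ) *
    (Complex.Gamma (((n : ℂ) - Complex.I * lam) / 2) / Complex.Gamma (-(Complex.I * lam))) *
    (ρ : ℂ) ^ (((n : ℂ) - Complex.I * lam) / 2) *
    ((ρ ^ 2 + ∑ j, x j ^ 2 : ℝ) : ℂ) ^ (-(((n : ℂ) - Complex.I * lam) / 2))

section PolynomialDecay

variable {E : Type*} [SeminormedAddCommGroup E]

theorem one_add_norm_le_mul_one_add_norm_sub (x u : E) :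
    1 + ‖u‖ ≤ (1 + ‖x‖) * (1 + ‖x - u‖) := by
  nlinarith [norm_le_norm_add_norm_sub x u, norm_nonneg x, norm_nonneg (x - u)]

/-- Peetre's inequality. -/
theorem one_add_norm_sub_rpow_neg_le {s : ℝ} (hs : 0 ≤ s) (x u : E) :
    (1 + ‖x - u‖) ^ (-s) ≤ (1 + ‖x‖) ^ s * (1 + ‖u‖) ^ (-s) := by
  have hu : 0 < 1 + ‖u‖ := by positivity
  have hxu : 0 < 1 + ‖x - u‖ := by positivity
  rw [Real.rpow_neg hxu.le, Real.rpow_neg hu.le, ← div_eq_mul_inv,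
    le_div_iff₀ (by positivity), ← div_eq_inv_mul, div_le_iff₀ (by positivity),
    ← Real.mul_rpow (by positivity) hxu.le]
  exact Real.rpow_le_rpow hu.le (one_add_norm_le_mul_one_add_norm_sub x u) hs

end PolynomialDecay

theorem sq_norm_le_sum_sq {ι : Type*} [Fintype ι] (v : ι → ℝ) : ‖v‖ ^ 2 ≤ ∑ j, v j ^ 2 := by
  have hsum : 0 ≤ ∑ j, v j ^ 2 := by positivity
  exact (Real.le_sqrt (norm_nonneg v) hsum).1 <|
    (pi_norm_le_iff_of_nonneg (Real.sqrt_nonneg _)).2 fun i =>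
      Real.abs_le_sqrt (Finset.single_le_sum (fun j _ => sq_nonneg (v j)) (Finset.mem_univ i))

theorem integral_comp_add_smul {E F : Type*} [NormedAddCommGroup E] [NormedSpace ℝ E]
    [MeasurableSpace E] [BorelSpace E] [FiniteDimensional ℝ E] [NormedAddCommGroup F]
    [NormedSpace ℝ F] (μ : Measure E) [μ.IsAddHaarMeasure] (f : E → F) (y : E) {r : ℝ}
    (hr : 0 ≤ r) :
    ∫ w, f (y + r • w) ∂μ = (r ^ Module.finrank ℝ E)⁻¹ • ∫ u, f u ∂μ := by
  rw [Measure.integral_comp_smul_of_nonneg μ (fun v => f (y + v)) r (hR := hr),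
    integral_add_left_eq_self]

section PoissonKernel

variable {n : ℕ} {lam ρ : ℝ}

theorem Pker_neg (x : Fin n → ℝ) : Pker n lam (-x) ρ = Pker n lam x ρ := by
  simp [Pker]

theorem continuous_Pker (hρ : 0 < ρ) : Continuous fun x : Fin n → ℝ => Pker n lam x ρ := by
  refine continuous_const.mul <| continuous_iff_continuousAt.2 fun x => ?_
  have hbase : Continuous fun x : Fin n → ℝ => ((ρ ^ 2 + ∑ j, x j ^ 2 : ℝ) : ℂ) := by fun_prop
  have hpos : (0 : ℝ) < ρ ^ 2 + ∑ j, x j ^ 2 := by positivity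
  exact hbase.continuousAt.cpow continuousAt_const (ofReal_mem_slitPlane.2 hpos)

theorem norm_Pker (hρ : 0 < ρ) (x : Fin n → ℝ) :
    ‖Pker n lam x ρ‖ =
      Real.pi ^ (-(n : ℝ) / 2) * ‖Gamma (((n : ℂ) - I * lam) / 2) / Gamma (-(I * lam))‖ *
        ρ ^ ((n : ℝ) / 2) * (ρ ^ 2 + ∑ j, x j ^ 2) ^ (-(n : ℝ) / 2) := by
  have hre : (((n : ℂ) - I * lam) / 2).re = (n : ℝ) / 2 := by simp
  rw [Pker, norm_mul, norm_mul, norm_mul, norm_cpow_eq_rpow_re_of_pos hρ,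
    norm_cpow_eq_rpow_re_of_pos (by positivity), neg_re, hre, norm_real, Real.norm_eq_abs,
    abs_of_pos (by positivity), neg_div]

theorem exists_norm_Pker_le (hρ : 0 < ρ) :
    ∃ C : ℝ, ∀ x : Fin n → ℝ, ‖Pker n lam x ρ‖ ≤ C * (1 + ‖x‖) ^ (-(n : ℝ)) := by
  set m : ℝ := min 1 (ρ ^ 2)
  set c : ℝ := m / 2 with hc_def
  have hc : 0 < c := by positivity
  refine ⟨Real.pi ^ (-(n : ℝ) / 2) * ‖Gamma (((n : ℂ) - I * lam) / 2) / Gamma (-(I * lam))‖ *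
    ρ ^ ((n : ℝ) / 2) * c ^ (-(n : ℝ) / 2), fun x => ?_⟩
  have hlower : c * (1 + ‖x‖) ^ 2 ≤ ρ ^ 2 + ∑ j, x j ^ 2 := by
    calc c * (1 + ‖x‖) ^ 2 ≤ m * (1 + ‖x‖ ^ 2) := by
          rw [hc_def]; nlinarith [mul_nonneg (by positivity : 0 ≤ m) (sq_nonneg (1 - ‖x‖))]
      _ ≤ ρ ^ 2 + ‖x‖ ^ 2 := by
          nlinarith [min_le_right 1 (ρ ^ 2), mul_le_mul_of_nonneg_right (min_le_left 1 (ρ ^ 2))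
            (sq_nonneg ‖x‖)]
      _ ≤ ρ ^ 2 + ∑ j, x j ^ 2 := by linarith [sq_norm_le_sum_sq x]
  have hdecay : (ρ ^ 2 + ∑ j, x j ^ 2) ^ (-(n : ℝ) / 2) ≤
      c ^ (-(n : ℝ) / 2) * (1 + ‖x‖) ^ (-(n : ℝ)) := by
    calc (ρ ^ 2 + ∑ j, x j ^ 2) ^ (-(n : ℝ) / 2)
        ≤ (c * (1 + ‖x‖) ^ 2) ^ (-(n : ℝ) / 2) :=
          Real.rpow_le_rpow_of_nonpos (by positivity) hlower (by linarith [n.cast_nonneg (α := ℝ)])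
      _ = c ^ (-(n : ℝ) / 2) * (1 + ‖x‖) ^ (-(n : ℝ)) := by
          rw [Real.mul_rpow hc.le (by positivity), ← Real.rpow_natCast,
            ← Real.rpow_mul (by positivity),
            show ((2 : ℕ) : ℝ) * (-(n : ℝ) / 2) = -n by push_cast; ring]
  rw [norm_Pker hρ, mul_assoc _ (c ^ _)]
  gcongr

theorem integrable_Pker_sub_mul_Pker (hn : 1 ≤ n) (lam' : ℝ) {r : ℝ} (hρ : 0 < ρ) (hr : 0 < r)
    (x : Fin n → ℝ) :
    Integrable fun u : Fin n → ℝ => Pker n lam (x - u) ρ * Pker n lam' u r := by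
  obtain ⟨C₁, hC₁⟩ := exists_norm_Pker_le (n := n) (lam := lam) hρ
  obtain ⟨C₂, hC₂⟩ := exists_norm_Pker_le (n := n) (lam := lam') hr
  have hdim : (Module.finrank ℝ (Fin n → ℝ) : ℝ) < n + n := by
    rw [Module.finrank_fin_fun]
    linarith [(Nat.one_le_cast (α := ℝ)).2 hn]
  refine ((integrable_one_add_norm hdim).const_mul (C₁ * (1 + ‖x‖) ^ (n : ℝ) * C₂)).mono'
    ((((continuous_Pker hρ).comp (continuous_sub_left x)).mul
      (continuous_Pker hr)).aestronglyMeasurable) (Filter.Eventually.of_forall fun u => ?_)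
  have hsub : ‖Pker n lam (x - u) ρ‖ ≤ C₁ * (1 + ‖x‖) ^ (n : ℝ) * (1 + ‖u‖) ^ (-(n : ℝ)) :=
    calc ‖Pker n lam (x - u) ρ‖ ≤ C₁ * (1 + ‖x - u‖) ^ (-(n : ℝ)) := hC₁ (x - u)
      _ ≤ C₁ * ((1 + ‖x‖) ^ (n : ℝ) * (1 + ‖u‖) ^ (-(n : ℝ))) := by
          have hC₁0 : 0 ≤ C₁ := nonneg_of_mul_nonneg_left ((norm_nonneg _).trans (hC₁ 0))
            (by positivity)
          gcongr
          exact one_add_norm_sub_rpow_neg_le n.cast_nonneg x u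
      _ = C₁ * (1 + ‖x‖) ^ (n : ℝ) * (1 + ‖u‖) ^ (-(n : ℝ)) := by ring
  rw [norm_mul, neg_add, Real.rpow_add (by positivity)]
  calc ‖Pker n lam (x - u) ρ‖ * ‖Pker n lam' u r‖
      ≤ (C₁ * (1 + ‖x‖) ^ (n : ℝ) * (1 + ‖u‖) ^ (-(n : ℝ))) * (C₂ * (1 + ‖u‖) ^ (-(n : ℝ))) :=
        mul_le_mul hsub (hC₂ u) (norm_nonneg _) ((norm_nonneg _).trans hsub)
    _ = _ := by ring

theorem Pker_smul_mul {r t : ℝ} (hr : 0 < r) (ht : 0 < t) (x : Fin n → ℝ) :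
    Pker n lam (r • x) (r * t) = (r : ℂ) ^ (-(((n : ℂ) - I * lam) / 2)) * Pker n lam x t := by
  simp only [Pker]
  set s : ℂ := ((n : ℂ) - I * lam) / 2
  have hrC : (r : ℂ) ≠ 0 := ofReal_ne_zero.2 hr.ne'
  have hsum : ((r * t) ^ 2 + ∑ j, (r • x) j ^ 2 : ℝ) = r * (r * (t ^ 2 + ∑ j, x j ^ 2)) := by
    simp only [Pi.smul_apply, smul_eq_mul, mul_pow, ← Finset.mul_sum]
    ring
  have hsplit : (r : ℂ) ^ (-s) = (r : ℂ) ^ s * ((r : ℂ) ^ (-s) * (r : ℂ) ^ (-s)) := by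
    rw [← cpow_add _ _ hrC, ← cpow_add _ _ hrC]
    ring_nf
  have hT : 0 ≤ t ^ 2 + ∑ j, x j ^ 2 := by positivity
  rw [hsum, ofReal_mul r t, mul_cpow_ofReal_nonneg hr.le ht.le, ofReal_mul r,
    mul_cpow_ofReal_nonneg hr.le (by positivity), ofReal_mul r,
    mul_cpow_ofReal_nonneg hr.le hT]
  conv_rhs => rw [hsplit]
  ring

theorem Pker_sub_mul_Pker_sub_add_smul {r : ℝ} (hρ : 0 < ρ) (hr : 0 < r) (x y w : Fin n → ℝ) :
    Pker n lam (x - (y + r • w)) ρ * Pker n (-lam) (y - (y + r • w)) r =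
      ((r ^ n)⁻¹ : ℂ) * (Pker n lam (r⁻¹ • (x - y) - w) (ρ / r) * Pker n (-lam) w 1) := by
  have hx : x - (y + r • w) = r • (r⁻¹ • (x - y) - w) := by
    rw [smul_sub, smul_inv_smul₀ hr.ne']
    abel
  have hy : y - (y + r • w) = -(r • w) := by abel
  have hscale := Pker_smul_mul (lam := lam) hr (div_pos hρ hr) (r⁻¹ • (x - y) - w)
  have hscale_neg := Pker_smul_mul (lam := -lam) hr one_pos w
  rw [mul_div_cancel₀ ρ hr.ne'] at hscale
  rw [mul_one] at hscale_neg
  have hexp : (r : ℂ) ^ (-(((n : ℂ) - I * lam) / 2)) *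
      (r : ℂ) ^ (-(((n : ℂ) - I * ((-lam : ℝ) : ℂ)) / 2)) = ((r ^ n)⁻¹ : ℂ) := by
    rw [← cpow_add _ _ (ofReal_ne_zero.2 hr.ne'),
      show -(((n : ℂ) - I * lam) / 2) + -(((n : ℂ) - I * ((-lam : ℝ) : ℂ)) / 2) = -(n : ℂ) by
        push_cast; ring,
      cpow_neg, cpow_natCast]
  rw [hx, hy, Pker_neg, hscale, hscale_neg, ← hexp]
  ring

theorem integral_Pker_mul_Pker_rescale {r : ℝ} (hρ : 0 < ρ) (hr : 0 < r) (x y : Fin n → ℝ) :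
    ∫ u : Fin n → ℝ, Pker n lam (r⁻¹ • (x - y) - u) (ρ / r) * Pker n (-lam) u 1 =
      ∫ u : Fin n → ℝ, Pker n lam (x - u) ρ * Pker n (-lam) (y - u) r := by
  have hcov := integral_comp_add_smul volume
    (fun u => Pker n lam (x - u) ρ * Pker n (-lam) (y - u) r) y hr.le
  simp only [Pker_sub_mul_Pker_sub_add_smul hρ hr, integral_const_mul, Module.finrank_fin_fun,
    Complex.real_smul, ofReal_inv, ofReal_pow] at hcov
  exact mul_left_cancel₀ (inv_ne_zero (pow_ne_zero n (ofReal_ne_zero.2 hr.ne'))) hcov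

end PoissonKernel

theorem stmt_4_general (n : ℕ) (hn : 1 ≤ n) (lam : ℝ) :
    (∀ (x : Fin n → ℝ) (ρ : ℝ), 0 < ρ →
      Integrable (fun u : Fin n → ℝ => Pker n lam (x - u) ρ * Pker n (-lam) u 1)) ∧
    ∀ (x y : Fin n → ℝ) (ρ r : ℝ), 0 < ρ → 0 < r →
      (∫ u : Fin n → ℝ, Pker n lam (r⁻¹ • (x - y) - u) (ρ / r) * Pker n (-lam) u 1)
        = ∫ u : Fin n → ℝ, Pker n lam (x - u) ρ * Pker n (-lam) (y - u) r :=
  ⟨fun x _ hρ => integrable_Pker_sub_mul_Pker hn (-lam) hρ one_pos x,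
    fun x y _ _ hρ hr => integral_Pker_mul_Pker_rescale hρ hr x y⟩

/-- absolute convergence of the integral defining the spherical function
`φ_λ(x,ρ) = ∫ P_λ(x−u,ρ) P_{−λ}(u,1) du` and the identity
`φ_λ((x−y)/r, ρ/r) = ∫ P_λ(x−u,ρ) P_{−λ}(y−u,r) du`. -/
theorem stmt_4 (n : ℕ) (hn : 1 ≤ n) (lam : ℝ) (hlam : lam ≠ 0) :
    (∀ (x : Fin n → ℝ) (ρ : ℝ), 0 < ρ →
      Integrable (fun u : Fin n → ℝ => Pker n lam (x - u) ρ * Pker n (-lam) u 1)) ∧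
    ∀ (x y : Fin n → ℝ) (ρ r : ℝ), 0 < ρ → 0 < r →
      (∫ u : Fin n → ℝ, Pker n lam (r⁻¹ • (x - y) - u) (ρ / r) * Pker n (-lam) u 1)
        = ∫ u : Fin n → ℝ, Pker n lam (x - u) ρ * Pker n (-lam) (y - u) r :=
  stmt_4_general n hn lam
end

section
/- Let n ≥ 1, s > 0 and set γ = (n+1+s)/2. Let U : ℝⁿ × ℝⁿ × ℝ × (0,∞) → ℂ be smooth and define W(x,u,ξ,ρ) = ρ^{(n+1−s)/2} U(x/√2, u/√2, ξ/2, √(2ρ)). Then W satisfies −Δ_S W = γ(n+1−γ) W on ℝ^{2n+1} × (0,∞) if and only if U satisfies −𝓛U + ∂_ρ² U + ((1−2s)/ρ) ∂_ρ U + (1/4) ρ² ∂_ξ² U = 0 on ℝ^{2n+1} × (0,∞). (Note γ(n+1−γ) = ((n+1)² − s²)/4.) -/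
open Complex
/-- Minus the Heisenberg sublaplacian:
`−𝓛F = Δ_{x,u}F + (1/4)(|x|²+|u|²)∂_ξ²F + Σ_j (u_j ∂_{x_j} − x_j ∂_{u_j})∂_ξ F`. -/
noncomputable def minusSubLap (n : ℕ) (F : (Fin n → ℝ) → (Fin n → ℝ) → ℝ → ℝ → ℂ)
    (x u : Fin n → ℝ) (ξ ρ : ℝ) : ℂ :=
  (∑ j, deriv (fun t => deriv (fun t' => F (Function.update x j t') u ξ ρ) t) (x j)) +
    (∑ j, deriv (fun t => deriv (fun t' => F x (Function.update u j t') ξ ρ) t) (u j)) +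
    ((((1 : ℝ) / 4) * ((∑ j, x j ^ 2) + ∑ j, u j ^ 2) : ℝ) : ℂ) *
      deriv (fun t => deriv (fun t' => F x u t' ρ) t) ξ +
    ∑ j,
      ((u j : ℂ) * deriv (fun t => deriv (fun τ => F (Function.update x j t) u τ ρ) ξ) (x j) -
        (x j : ℂ) * deriv (fun t => deriv (fun τ => F x (Function.update u j t) τ ρ) ξ) (u j))

/-- The Laplace–Beltrami operator of `S = ℍⁿ ⋉ ℝ₊`:
`Δ_S = ρ(−𝓛) + ρ²∂_ξ² + (ρ∂_ρ)² − (n+1)ρ∂_ρ`. -/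
noncomputable def deltaS (n : ℕ) (F : (Fin n → ℝ) → (Fin n → ℝ) → ℝ → ℝ → ℂ)
    (x u : Fin n → ℝ) (ξ ρ : ℝ) : ℂ :=
  (ρ : ℂ) * minusSubLap n F x u ξ ρ +
    (ρ : ℂ) ^ 2 * deriv (fun t => deriv (fun t' => F x u t' ρ) t) ξ +
    (ρ : ℂ) * deriv (fun r : ℝ => (r : ℂ) * deriv (fun r' => F x u ξ r') r) ρ -
    ((n : ℂ) + 1) * (ρ : ℂ) * deriv (fun r => F x u ξ r) ρ


noncomputable section
namespace Stmt6

abbrev En (n : ℕ) := (Fin n → ℝ) × (Fin n → ℝ) × ℝ × ℝ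

variable {n : ℕ}

def D1 (F : En n → ℂ) (p v : En n) : ℂ := fderiv ℝ F p v
def D2 (F : En n → ℂ) (p v w : En n) : ℂ := fderiv ℝ (fderiv ℝ F) p v w

theorem line_hasDerivAt {F : En n → ℂ} {a v p : En n} {t₀ : ℝ}
    (hF : ContDiffAt ℝ (⊤ : ℕ∞) F p) (hp : a + t₀ • v = p) :
    HasDerivAt (fun t => F (a + t • v)) (D1 F p v) t₀ := by
  subst hp
  have h1 : HasDerivAt (fun t : ℝ => a + t • v) v t₀ := by
    simpa using ((hasDerivAt_id t₀).smul_const v).const_add a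
  have := (hF.differentiableAt (by simp)).hasFDerivAt.comp_hasDerivAt t₀ h1
  simpa [D1, Function.comp_def] using this

theorem line_hasDerivAt_D1 {F : En n → ℂ} {a v p : En n} (w : En n) {t₀ : ℝ}
    (hF : ContDiffAt ℝ (⊤ : ℕ∞) F p) (hp : a + t₀ • v = p) :
    HasDerivAt (fun t => D1 F (a + t • v) w) (D2 F p v w) t₀ := by
  subst hp
  have hΦ : ContDiffAt ℝ (⊤ : ℕ∞) (fderiv ℝ F) (a + t₀ • v) := hF.fderiv_right (by simp)
  have h1 : HasDerivAt (fun t : ℝ => a + t • v) v t₀ := by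
    simpa using ((hasDerivAt_id t₀).smul_const v).const_add a
  have h2 := (hΦ.differentiableAt (by simp)).hasFDerivAt.comp_hasDerivAt t₀ h1
  have h3 := h2.clm_apply (hasDerivAt_const t₀ w)
  simpa [D1, D2, Function.comp] using h3

theorem D1_smul {F : En n → ℂ} (p : En n) (c : ℝ) (v : En n) :
    D1 F p (c • v) = (c : ℂ) * D1 F p v := by
  simp [D1, map_smul, Complex.real_smul]

theorem D2_smul_left {F : En n → ℂ} (p : En n) (c : ℝ) (v w : En n) :
    D2 F p (c • v) w = (c : ℂ) * D2 F p v w := by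
  simp [D2, map_smul, Complex.real_smul]

def ex (j : Fin n) : En n := (Pi.single j 1, 0, 0, 0)
def eu (j : Fin n) : En n := (0, Pi.single j 1, 0, 0)
def ee : En n := (0, 0, 1, 0)
def er : En n := (0, 0, 0, 1)

theorem slice_x (x u : Fin n → ℝ) (ξ ρ : ℝ) (j : Fin n) (c t : ℝ) :
    ((Function.update x j 0, u, ξ, ρ) : En n) + t • (c • ex j) =
      (Function.update x j (t * c), u, ξ, ρ) := by
  simp only [ex, Prod.smul_mk, Prod.mk_add_mk, smul_zero, add_zero]
  refine Prod.ext ?_ rfl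
  funext i
  by_cases h : i = j
  · subst h; simp [mul_comm]
  · simp [Function.update_of_ne h, Pi.single_apply, h]

theorem slice_u (x u : Fin n → ℝ) (ξ ρ : ℝ) (j : Fin n) (c t : ℝ) :
    ((x, Function.update u j 0, ξ, ρ) : En n) + t • (c • eu j) =
      (x, Function.update u j (t * c), ξ, ρ) := by
  simp only [eu, Prod.smul_mk, Prod.mk_add_mk, smul_zero, add_zero]
  refine Prod.ext rfl (Prod.ext ?_ rfl)
  funext i
  by_cases h : i = j
  · subst h; simp [mul_comm]
  · simp [Function.update_of_ne h, Pi.single_apply, h]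

theorem slice_xi (x u : Fin n → ℝ) (ρ : ℝ) (c t : ℝ) :
    ((x, u, 0, ρ) : En n) + t • (c • ee) = (x, u, t * c, ρ) := by
  simp [ee, Prod.smul_mk, Prod.mk_add_mk, mul_comm]

theorem slice_r (x u : Fin n → ℝ) (ξ : ℝ) (c t : ℝ) :
    ((x, u, ξ, 0) : En n) + t • (c • er) = (x, u, ξ, t * c) := by
  simp [er, Prod.smul_mk, Prod.mk_add_mk, mul_comm]

variable {G : En n → ℂ} (hG : ∀ p : En n, 0 < p.2.2.2 → ContDiffAt ℝ (⊤ : ℕ∞) G p)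

section FirstLayer
variable (K : ℂ) (c : ℝ) (x u : Fin n → ℝ) (ξ : ℝ) {ρ : ℝ} (hρ : 0 < ρ) (t₀ : ℝ)

include hG hρ

theorem hdX (j : Fin n) :
    HasDerivAt (fun t => K * G (Function.update x j (t * c), u, ξ, ρ))
      (K * ((c : ℂ) * D1 G (Function.update x j (t₀ * c), u, ξ, ρ) (ex j))) t₀ := by
  have h := (line_hasDerivAt (hG _ hρ) (slice_x x u ξ ρ j c t₀)).const_mul K
  rw [D1_smul] at h
  have hf : (fun t => K * G (Function.update x j (t * c), u, ξ, ρ))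
      = fun t => K * G ((Function.update x j 0, u, ξ, ρ) + t • (c • ex j)) := by
    funext t; rw [slice_x]
  rw [hf]; exact h

theorem hdU (j : Fin n) :
    HasDerivAt (fun t => K * G (x, Function.update u j (t * c), ξ, ρ))
      (K * ((c : ℂ) * D1 G (x, Function.update u j (t₀ * c), ξ, ρ) (eu j))) t₀ := by
  have h := (line_hasDerivAt (hG _ hρ) (slice_u x u ξ ρ j c t₀)).const_mul K
  rw [D1_smul] at h
  have hf : (fun t => K * G (x, Function.update u j (t * c), ξ, ρ))
      = fun t => K * G ((x, Function.update u j 0, ξ, ρ) + t • (c • eu j)) := by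
    funext t; rw [slice_u]
  rw [hf]; exact h

theorem hdXi :
    HasDerivAt (fun t => K * G (x, u, t * c, ρ))
      (K * ((c : ℂ) * D1 G (x, u, t₀ * c, ρ) ee)) t₀ := by
  have h := (line_hasDerivAt (hG _ hρ) (slice_xi x u ρ c t₀)).const_mul K
  rw [D1_smul] at h
  have hf : (fun t => K * G (x, u, t * c, ρ)) = fun t => K * G ((x, u, 0, ρ) + t • (c • ee)) := by
    funext t; rw [slice_xi]
  rw [hf]; exact h

end FirstLayer

section FirstLayerR
variable (K : ℂ) (c : ℝ) (x u : Fin n → ℝ) (ξ : ℝ) {t₀ : ℝ}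
include hG

theorem hdR (ht : 0 < t₀ * c) :
    HasDerivAt (fun t => K * G (x, u, ξ, t * c))
      (K * ((c : ℂ) * D1 G (x, u, ξ, t₀ * c) er)) t₀ := by
  have h := (line_hasDerivAt (hG ((x, u, ξ, t₀*c) : En n) ht) (slice_r x u ξ c t₀)).const_mul K
  rw [D1_smul] at h
  have hf : (fun t => K * G (x, u, ξ, t * c)) = fun t => K * G ((x, u, ξ, 0) + t • (c • er)) := by
    funext t; rw [slice_r]
  rw [hf]; exact h

end FirstLayerR

section SecondLayer
variable (K : ℂ) (c : ℝ) (w : En n) (x u : Fin n → ℝ) (ξ : ℝ) {ρ : ℝ} (hρ : 0 < ρ) (t₀ : ℝ)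
include hG hρ

theorem hdX_D1 (j : Fin n) :
    HasDerivAt (fun t => K * D1 G (Function.update x j (t * c), u, ξ, ρ) w)
      (K * ((c : ℂ) * D2 G (Function.update x j (t₀ * c), u, ξ, ρ) (ex j) w)) t₀ := by
  have h := (line_hasDerivAt_D1 w (hG _ hρ) (slice_x x u ξ ρ j c t₀)).const_mul K
  rw [D2_smul_left] at h
  have hf : (fun t => K * D1 G (Function.update x j (t * c), u, ξ, ρ) w)
      = fun t => K * D1 G ((Function.update x j 0, u, ξ, ρ) + t • (c • ex j)) w := by
    funext t; rw [slice_x]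
  rw [hf]; exact h

theorem hdU_D1 (j : Fin n) :
    HasDerivAt (fun t => K * D1 G (x, Function.update u j (t * c), ξ, ρ) w)
      (K * ((c : ℂ) * D2 G (x, Function.update u j (t₀ * c), ξ, ρ) (eu j) w)) t₀ := by
  have h := (line_hasDerivAt_D1 w (hG _ hρ) (slice_u x u ξ ρ j c t₀)).const_mul K
  rw [D2_smul_left] at h
  have hf : (fun t => K * D1 G (x, Function.update u j (t * c), ξ, ρ) w)
      = fun t => K * D1 G ((x, Function.update u j 0, ξ, ρ) + t • (c • eu j)) w := by
    funext t; rw [slice_u]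
  rw [hf]; exact h

theorem hdXi_D1 :
    HasDerivAt (fun t => K * D1 G (x, u, t * c, ρ) w)
      (K * ((c : ℂ) * D2 G (x, u, t₀ * c, ρ) ee w)) t₀ := by
  have h := (line_hasDerivAt_D1 w (hG _ hρ) (slice_xi x u ρ c t₀)).const_mul K
  rw [D2_smul_left] at h
  have hf : (fun t => K * D1 G (x, u, t * c, ρ) w)
      = fun t => K * D1 G ((x, u, 0, ρ) + t • (c • ee)) w := by
    funext t; rw [slice_xi]
  rw [hf]; exact h

end SecondLayer

section SecondLayerR
variable (K : ℂ) (c : ℝ) (w : En n) (x u : Fin n → ℝ) (ξ : ℝ) {t₀ : ℝ}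
include hG

theorem hdR_D1 (ht : 0 < t₀ * c) :
    HasDerivAt (fun t => K * D1 G (x, u, ξ, t * c) w)
      (K * ((c : ℂ) * D2 G (x, u, ξ, t₀ * c) er w)) t₀ := by
  have h := (line_hasDerivAt_D1 w (hG ((x,u,ξ,t₀*c) : En n) ht) (slice_r x u ξ c t₀)).const_mul K
  rw [D2_smul_left] at h
  have hf : (fun t => K * D1 G (x, u, ξ, t * c) w)
      = fun t => K * D1 G ((x, u, ξ, 0) + t • (c • er)) w := by
    funext t; rw [slice_r]
  rw [hf]; exact h

end SecondLayerR

def unc (V : (Fin n → ℝ) → (Fin n → ℝ) → ℝ → ℝ → ℂ) : En n → ℂ :=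
  fun p => V p.1 p.2.1 p.2.2.1 p.2.2.2

@[simp] theorem unc_apply (V : (Fin n → ℝ) → (Fin n → ℝ) → ℝ → ℝ → ℂ)
    (a b : Fin n → ℝ) (c d : ℝ) : unc V (a, b, c, d) = V a b c d := rfl

section USide
variable {V : (Fin n → ℝ) → (Fin n → ℝ) → ℝ → ℝ → ℂ}
  (hV : ∀ p : En n, 0 < p.2.2.2 → ContDiffAt ℝ (⊤ : ℕ∞) (unc V) p)
  (x u : Fin n → ℝ) (ξ : ℝ) {ρ : ℝ} (hρ : 0 < ρ)

include hV hρ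

theorem dXX (j : Fin n) :
    deriv (fun t => deriv (fun t' => V (Function.update x j t') u ξ ρ) t) (x j)
      = D2 (unc V) (x, u, ξ, ρ) (ex j) (ex j) := by
  have h2 : (fun t => deriv (fun t' => V (Function.update x j t') u ξ ρ) t)
      = fun t => (1 : ℂ) * D1 (unc V) (Function.update x j (t * 1), u, ξ, ρ) (ex j) := by
    funext t
    have h := (hdX hV 1 1 x u ξ hρ t j).deriv
    simpa using h
  rw [h2]
  have h := (hdX_D1 hV 1 1 (ex j) x u ξ hρ (x j) j).deriv
  simpa using h

theorem dUU (j : Fin n) :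
    deriv (fun t => deriv (fun t' => V x (Function.update u j t') ξ ρ) t) (u j)
      = D2 (unc V) (x, u, ξ, ρ) (eu j) (eu j) := by
  have h2 : (fun t => deriv (fun t' => V x (Function.update u j t') ξ ρ) t)
      = fun t => (1 : ℂ) * D1 (unc V) (x, Function.update u j (t * 1), ξ, ρ) (eu j) := by
    funext t
    have h := (hdU hV 1 1 x u ξ hρ t j).deriv
    simpa using h
  rw [h2]
  have h := (hdU_D1 hV 1 1 (eu j) x u ξ hρ (u j) j).deriv
  simpa using h

theorem dEE :
    deriv (fun t => deriv (fun t' => V x u t' ρ) t) ξ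
      = D2 (unc V) (x, u, ξ, ρ) ee ee := by
  have h2 : (fun t => deriv (fun t' => V x u t' ρ) t)
      = fun t => (1 : ℂ) * D1 (unc V) (x, u, t * 1, ρ) ee := by
    funext t
    have h := (hdXi hV 1 1 x u hρ t).deriv
    simpa using h
  rw [h2]
  have h := (hdXi_D1 hV 1 1 ee x u hρ ξ).deriv
  simpa using h

theorem dXE (j : Fin n) :
    deriv (fun t => deriv (fun τ => V (Function.update x j t) u τ ρ) ξ) (x j)
      = D2 (unc V) (x, u, ξ, ρ) (ex j) ee := by
  have h2 : (fun t => deriv (fun τ => V (Function.update x j t) u τ ρ) ξ)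
      = fun t => (1 : ℂ) * D1 (unc V) (Function.update x j (t * 1), u, ξ, ρ) ee := by
    funext t
    have h := (hdXi (x := Function.update x j t) hV 1 1 u hρ ξ).deriv
    simpa using h
  rw [h2]
  have h := (hdX_D1 hV 1 1 ee x u ξ hρ (x j) j).deriv
  simpa using h

theorem dUE (j : Fin n) :
    deriv (fun t => deriv (fun τ => V x (Function.update u j t) τ ρ) ξ) (u j)
      = D2 (unc V) (x, u, ξ, ρ) (eu j) ee := by
  have h2 : (fun t => deriv (fun τ => V x (Function.update u j t) τ ρ) ξ)
      = fun t => (1 : ℂ) * D1 (unc V) (x, Function.update u j (t * 1), ξ, ρ) ee := by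
    funext t
    have h := (hdXi (u := Function.update u j t) hV 1 1 x hρ ξ).deriv
    simpa using h
  rw [h2]
  have h := (hdU_D1 hV 1 1 ee x u ξ hρ (u j) j).deriv
  simpa using h

theorem dR :
    deriv (fun r => V x u ξ r) ρ = D1 (unc V) (x, u, ξ, ρ) er := by
  have h := (hdR hV 1 1 x u ξ (t₀ := ρ) (by simpa using hρ)).deriv
  simpa using h

theorem dRR :
    deriv (fun r => deriv (fun r' => V x u ξ r') r) ρ
      = D2 (unc V) (x, u, ξ, ρ) er er := by
  have hev : (fun r => deriv (fun r' => V x u ξ r') r)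
      =ᶠ[nhds ρ] fun r => (1 : ℂ) * D1 (unc V) (x, u, ξ, r * 1) er := by
    filter_upwards [Ioi_mem_nhds hρ] with t ht
    have h := (hdR hV 1 1 x u ξ (t₀ := t) (by simpa using ht)).deriv
    simpa using h
    
  rw [hev.deriv_eq]
  have h := (hdR_D1 hV 1 1 er x u ξ (t₀ := ρ) (by simpa using hρ)).deriv
  simpa using h

end USide

theorem upd_div (x : Fin n → ℝ) (j : Fin n) (t : ℝ) :
    (fun i => Function.update x j t i / Real.sqrt 2)
      = Function.update (fun i => x i / Real.sqrt 2) j (t * (Real.sqrt 2)⁻¹) := by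
  funext i
  by_cases h : i = j
  · subst h; simp [div_eq_mul_inv]
  · simp [Function.update_of_ne h]

theorem upd_self' (x : Fin n → ℝ) (j : Fin n) :
    Function.update (fun i => x i / Real.sqrt 2) j (x j * (Real.sqrt 2)⁻¹)
      = fun i => x i / Real.sqrt 2 := by
  have := Function.update_eq_self j (fun i => x i / Real.sqrt 2)
  simpa [div_eq_mul_inv] using this

section WSide
variable {V : (Fin n → ℝ) → (Fin n → ℝ) → ℝ → ℝ → ℂ}
  (hV : ∀ p : En n, 0 < p.2.2.2 → ContDiffAt ℝ (⊤ : ℕ∞) (unc V) p)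
  {W : (Fin n → ℝ) → (Fin n → ℝ) → ℝ → ℝ → ℂ} {α : ℝ}
  (hW : ∀ (x u : Fin n → ℝ) (ξ ρ : ℝ),
      W x u ξ ρ = ((ρ ^ α : ℝ) : ℂ) *
        V (fun j => x j / Real.sqrt 2) (fun j => u j / Real.sqrt 2) (ξ / 2)
          (Real.sqrt (2 * ρ)))
  (x u : Fin n → ℝ) (ξ : ℝ) {ρ : ℝ} (hρ : 0 < ρ)

include hV hW hρ

theorem WXX (j : Fin n) :
    deriv (fun t => deriv (fun t' => W (Function.update x j t') u ξ ρ) t) (x j)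
      = (((ρ ^ α : ℝ) : ℂ) * (((Real.sqrt 2)⁻¹ : ℝ) : ℂ)) *
          ((((Real.sqrt 2)⁻¹ : ℝ) : ℂ) *
            D2 (unc V) ((fun i => x i / Real.sqrt 2), (fun i => u i / Real.sqrt 2), ξ / 2,
              Real.sqrt (2 * ρ)) (ex j) (ex j)) := by
  have hr : 0 < Real.sqrt (2 * ρ) := Real.sqrt_pos.2 (by linarith)
  have h1 : ∀ t, deriv (fun t' => W (Function.update x j t') u ξ ρ) t
      = ((ρ ^ α : ℝ) : ℂ) * ((((Real.sqrt 2)⁻¹ : ℝ) : ℂ) *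
          D1 (unc V) (Function.update (fun i => x i / Real.sqrt 2) j (t * (Real.sqrt 2)⁻¹),
            (fun i => u i / Real.sqrt 2), ξ / 2, Real.sqrt (2 * ρ)) (ex j)) := by
    intro t
    have hfun : (fun t' => W (Function.update x j t') u ξ ρ)
        = fun t' => ((ρ ^ α : ℝ) : ℂ) *
            unc V (Function.update (fun i => x i / Real.sqrt 2) j (t' * (Real.sqrt 2)⁻¹),
              (fun i => u i / Real.sqrt 2), ξ / 2, Real.sqrt (2 * ρ)) := by
      funext t'; rw [hW, upd_div]; rfl
    rw [hfun]
    exact (hdX hV _ _ _ _ _ hr t j).deriv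
  have h2 : (fun t => deriv (fun t' => W (Function.update x j t') u ξ ρ) t)
      = fun t => (((ρ ^ α : ℝ) : ℂ) * (((Real.sqrt 2)⁻¹ : ℝ) : ℂ)) *
          D1 (unc V) (Function.update (fun i => x i / Real.sqrt 2) j (t * (Real.sqrt 2)⁻¹),
            (fun i => u i / Real.sqrt 2), ξ / 2, Real.sqrt (2 * ρ)) (ex j) := by
    funext t; rw [h1 t]; ring
  rw [h2, (hdX_D1 hV _ _ (ex j) _ _ _ hr (x j) j).deriv, upd_self']

theorem WUU (j : Fin n) :
    deriv (fun t => deriv (fun t' => W x (Function.update u j t') ξ ρ) t) (u j)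
      = (((ρ ^ α : ℝ) : ℂ) * (((Real.sqrt 2)⁻¹ : ℝ) : ℂ)) *
          ((((Real.sqrt 2)⁻¹ : ℝ) : ℂ) *
            D2 (unc V) ((fun i => x i / Real.sqrt 2), (fun i => u i / Real.sqrt 2), ξ / 2,
              Real.sqrt (2 * ρ)) (eu j) (eu j)) := by
  have hr : 0 < Real.sqrt (2 * ρ) := Real.sqrt_pos.2 (by linarith)
  have h1 : ∀ t, deriv (fun t' => W x (Function.update u j t') ξ ρ) t
      = ((ρ ^ α : ℝ) : ℂ) * ((((Real.sqrt 2)⁻¹ : ℝ) : ℂ) *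
          D1 (unc V) ((fun i => x i / Real.sqrt 2),
            Function.update (fun i => u i / Real.sqrt 2) j (t * (Real.sqrt 2)⁻¹),
            ξ / 2, Real.sqrt (2 * ρ)) (eu j)) := by
    intro t
    have hfun : (fun t' => W x (Function.update u j t') ξ ρ)
        = fun t' => ((ρ ^ α : ℝ) : ℂ) *
            unc V ((fun i => x i / Real.sqrt 2),
              Function.update (fun i => u i / Real.sqrt 2) j (t' * (Real.sqrt 2)⁻¹),
              ξ / 2, Real.sqrt (2 * ρ)) := by
      funext t'; rw [hW, upd_div]; rfl
    rw [hfun]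
    exact (hdU hV _ _ _ _ _ hr t j).deriv
  have h2 : (fun t => deriv (fun t' => W x (Function.update u j t') ξ ρ) t)
      = fun t => (((ρ ^ α : ℝ) : ℂ) * (((Real.sqrt 2)⁻¹ : ℝ) : ℂ)) *
          D1 (unc V) ((fun i => x i / Real.sqrt 2),
            Function.update (fun i => u i / Real.sqrt 2) j (t * (Real.sqrt 2)⁻¹),
            ξ / 2, Real.sqrt (2 * ρ)) (eu j) := by
    funext t; rw [h1 t]; ring
  rw [h2, (hdU_D1 hV _ _ (eu j) _ _ _ hr (u j) j).deriv, upd_self']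

theorem WEE :
    deriv (fun t => deriv (fun t' => W x u t' ρ) t) ξ
      = (((ρ ^ α : ℝ) : ℂ) * (((2 : ℝ)⁻¹ : ℝ) : ℂ)) *
          ((((2 : ℝ)⁻¹ : ℝ) : ℂ) *
            D2 (unc V) ((fun i => x i / Real.sqrt 2), (fun i => u i / Real.sqrt 2), ξ / 2,
              Real.sqrt (2 * ρ)) ee ee) := by
  have hr : 0 < Real.sqrt (2 * ρ) := Real.sqrt_pos.2 (by linarith)
  have h1 : ∀ t, deriv (fun t' => W x u t' ρ) t
      = ((ρ ^ α : ℝ) : ℂ) * ((((2 : ℝ)⁻¹ : ℝ) : ℂ) *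
          D1 (unc V) ((fun i => x i / Real.sqrt 2), (fun i => u i / Real.sqrt 2),
            t * (2 : ℝ)⁻¹, Real.sqrt (2 * ρ)) ee) := by
    intro t
    have hfun : (fun t' => W x u t' ρ)
        = fun t' => ((ρ ^ α : ℝ) : ℂ) *
            unc V ((fun i => x i / Real.sqrt 2), (fun i => u i / Real.sqrt 2),
              t' * (2 : ℝ)⁻¹, Real.sqrt (2 * ρ)) := by
      funext t'; rw [hW, div_eq_mul_inv]; rfl
    rw [hfun]
    exact (hdXi hV _ _ _ _ hr t).deriv
  have h2 : (fun t => deriv (fun t' => W x u t' ρ) t)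
      = fun t => (((ρ ^ α : ℝ) : ℂ) * (((2 : ℝ)⁻¹ : ℝ) : ℂ)) *
          D1 (unc V) ((fun i => x i / Real.sqrt 2), (fun i => u i / Real.sqrt 2),
            t * (2 : ℝ)⁻¹, Real.sqrt (2 * ρ)) ee := by
    funext t; rw [h1 t]; ring
  rw [h2, (hdXi_D1 hV _ _ ee _ _ hr ξ).deriv, show ξ * (2:ℝ)⁻¹ = ξ / 2 from (div_eq_mul_inv ξ 2).symm]

theorem WXE (j : Fin n) :
    deriv (fun t => deriv (fun τ => W (Function.update x j t) u τ ρ) ξ) (x j)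
      = (((ρ ^ α : ℝ) : ℂ) * (((2 : ℝ)⁻¹ : ℝ) : ℂ)) *
          ((((Real.sqrt 2)⁻¹ : ℝ) : ℂ) *
            D2 (unc V) ((fun i => x i / Real.sqrt 2), (fun i => u i / Real.sqrt 2), ξ / 2,
              Real.sqrt (2 * ρ)) (ex j) ee) := by
  have hr : 0 < Real.sqrt (2 * ρ) := Real.sqrt_pos.2 (by linarith)
  have h1 : ∀ t, deriv (fun τ => W (Function.update x j t) u τ ρ) ξ
      = ((ρ ^ α : ℝ) : ℂ) * ((((2 : ℝ)⁻¹ : ℝ) : ℂ) *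
          D1 (unc V) (Function.update (fun i => x i / Real.sqrt 2) j (t * (Real.sqrt 2)⁻¹),
            (fun i => u i / Real.sqrt 2), ξ * (2 : ℝ)⁻¹, Real.sqrt (2 * ρ)) ee) := by
    intro t
    have hfun : (fun τ => W (Function.update x j t) u τ ρ)
        = fun τ => ((ρ ^ α : ℝ) : ℂ) *
            unc V (Function.update (fun i => x i / Real.sqrt 2) j (t * (Real.sqrt 2)⁻¹),
              (fun i => u i / Real.sqrt 2), τ * (2 : ℝ)⁻¹, Real.sqrt (2 * ρ)) := by
      funext τ; rw [hW, upd_div, div_eq_mul_inv]; rfl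
    rw [hfun]
    exact (hdXi hV _ _ _ _ hr ξ).deriv
  have h2 : (fun t => deriv (fun τ => W (Function.update x j t) u τ ρ) ξ)
      = fun t => (((ρ ^ α : ℝ) : ℂ) * (((2 : ℝ)⁻¹ : ℝ) : ℂ)) *
          D1 (unc V) (Function.update (fun i => x i / Real.sqrt 2) j (t * (Real.sqrt 2)⁻¹),
            (fun i => u i / Real.sqrt 2), ξ * (2 : ℝ)⁻¹, Real.sqrt (2 * ρ)) ee := by
    funext t; rw [h1 t]; ring
  rw [h2, (hdX_D1 hV _ _ ee _ _ _ hr (x j) j).deriv, upd_self',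
    show ξ * (2:ℝ)⁻¹ = ξ / 2 from (div_eq_mul_inv ξ 2).symm]

theorem WUE (j : Fin n) :
    deriv (fun t => deriv (fun τ => W x (Function.update u j t) τ ρ) ξ) (u j)
      = (((ρ ^ α : ℝ) : ℂ) * (((2 : ℝ)⁻¹ : ℝ) : ℂ)) *
          ((((Real.sqrt 2)⁻¹ : ℝ) : ℂ) *
            D2 (unc V) ((fun i => x i / Real.sqrt 2), (fun i => u i / Real.sqrt 2), ξ / 2,
              Real.sqrt (2 * ρ)) (eu j) ee) := by
  have hr : 0 < Real.sqrt (2 * ρ) := Real.sqrt_pos.2 (by linarith)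
  have h1 : ∀ t, deriv (fun τ => W x (Function.update u j t) τ ρ) ξ
      = ((ρ ^ α : ℝ) : ℂ) * ((((2 : ℝ)⁻¹ : ℝ) : ℂ) *
          D1 (unc V) ((fun i => x i / Real.sqrt 2),
            Function.update (fun i => u i / Real.sqrt 2) j (t * (Real.sqrt 2)⁻¹),
            ξ * (2 : ℝ)⁻¹, Real.sqrt (2 * ρ)) ee) := by
    intro t
    have hfun : (fun τ => W x (Function.update u j t) τ ρ)
        = fun τ => ((ρ ^ α : ℝ) : ℂ) *
            unc V ((fun i => x i / Real.sqrt 2),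
              Function.update (fun i => u i / Real.sqrt 2) j (t * (Real.sqrt 2)⁻¹),
              τ * (2 : ℝ)⁻¹, Real.sqrt (2 * ρ)) := by
      funext τ; rw [hW, upd_div, div_eq_mul_inv]; rfl
    rw [hfun]
    exact (hdXi hV _ _ _ _ hr ξ).deriv
  have h2 : (fun t => deriv (fun τ => W x (Function.update u j t) τ ρ) ξ)
      = fun t => (((ρ ^ α : ℝ) : ℂ) * (((2 : ℝ)⁻¹ : ℝ) : ℂ)) *
          D1 (unc V) ((fun i => x i / Real.sqrt 2),
            Function.update (fun i => u i / Real.sqrt 2) j (t * (Real.sqrt 2)⁻¹),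
            ξ * (2 : ℝ)⁻¹, Real.sqrt (2 * ρ)) ee := by
    funext t; rw [h1 t]; ring
  rw [h2, (hdU_D1 hV _ _ ee _ _ _ hr (u j) j).deriv, upd_self',
    show ξ * (2:ℝ)⁻¹ = ξ / 2 from (div_eq_mul_inv ξ 2).symm]

end WSide

section WRad
variable {V : (Fin n → ℝ) → (Fin n → ℝ) → ℝ → ℝ → ℂ}
  (hV : ∀ p : En n, 0 < p.2.2.2 → ContDiffAt ℝ (⊤ : ℕ∞) (unc V) p)
  {W : (Fin n → ℝ) → (Fin n → ℝ) → ℝ → ℝ → ℂ} {α : ℝ}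
  (hW : ∀ (x u : Fin n → ℝ) (ξ ρ : ℝ),
      W x u ξ ρ = ((ρ ^ α : ℝ) : ℂ) *
        V (fun j => x j / Real.sqrt 2) (fun j => u j / Real.sqrt 2) (ξ / 2)
          (Real.sqrt (2 * ρ)))
  (x u : Fin n → ℝ) (ξ : ℝ)

include hV hW

theorem sqrt2mul_hasDeriv {ρ : ℝ} (hρ : 0 < ρ) :
    HasDerivAt (fun t => Real.sqrt (2 * t)) ((Real.sqrt (2 * ρ))⁻¹) ρ := by
  have h2t : HasDerivAt (fun t : ℝ => 2 * t) 2 ρ := by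
    simpa using (hasDerivAt_id ρ).const_mul 2
  have h := (Real.hasDerivAt_sqrt (by positivity : (2 * ρ) ≠ 0)).comp ρ h2t
  have hr : Real.sqrt (2 * ρ) ≠ 0 := (Real.sqrt_pos.2 (by linarith)).ne'
  have hval : 1 / (2 * Real.sqrt (2 * ρ)) * 2 = (Real.sqrt (2 * ρ))⁻¹ := by
    field_simp
  rw [hval] at h
  exact h

theorem WR {ρ : ℝ} (hρ : 0 < ρ) :
    deriv (fun r' => W x u ξ r') ρ
      = ((α * ρ ^ (α - 1) : ℝ) : ℂ) *
          unc V ((fun i => x i / Real.sqrt 2), (fun i => u i / Real.sqrt 2), ξ / 2,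
            Real.sqrt (2 * ρ))
        + ((ρ ^ α : ℝ) : ℂ) * ((((Real.sqrt (2 * ρ))⁻¹ : ℝ) : ℂ) *
            D1 (unc V) ((fun i => x i / Real.sqrt 2), (fun i => u i / Real.sqrt 2), ξ / 2,
              Real.sqrt (2 * ρ)) er) := by
  have hr : 0 < Real.sqrt (2 * ρ) := Real.sqrt_pos.2 (by linarith)
  have hfun : (fun r' => W x u ξ r')
      = fun r' => ((r' ^ α : ℝ) : ℂ) *
          unc V ((fun i => x i / Real.sqrt 2), (fun i => u i / Real.sqrt 2), ξ / 2,
            Real.sqrt (2 * r')) := by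
    funext r'; rw [hW]; rfl
  have hφ : HasDerivAt (fun r' : ℝ => ((r' ^ α : ℝ) : ℂ)) ((α * ρ ^ (α - 1) : ℝ) : ℂ) ρ :=
    (Real.hasDerivAt_rpow_const (Or.inl hρ.ne')).ofReal_comp
  have hginner : HasDerivAt
      (fun y => unc V ((fun i => x i / Real.sqrt 2), (fun i => u i / Real.sqrt 2), ξ / 2, y))
      (D1 (unc V) ((fun i => x i / Real.sqrt 2), (fun i => u i / Real.sqrt 2), ξ / 2,
        Real.sqrt (2 * ρ)) er) (Real.sqrt (2 * ρ)) := by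
    have h := hdR hV 1 1 (fun i => x i / Real.sqrt 2) (fun i => u i / Real.sqrt 2) (ξ / 2)
      (t₀ := Real.sqrt (2 * ρ)) (by simpa using hr)
    simpa using h
  have hg : HasDerivAt
      (fun t => unc V ((fun i => x i / Real.sqrt 2), (fun i => u i / Real.sqrt 2), ξ / 2,
        Real.sqrt (2 * t)))
      ((((Real.sqrt (2 * ρ))⁻¹ : ℝ) : ℂ) *
        D1 (unc V) ((fun i => x i / Real.sqrt 2), (fun i => u i / Real.sqrt 2), ξ / 2,
          Real.sqrt (2 * ρ)) er) ρ := by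
    have h := hginner.scomp ρ (sqrt2mul_hasDeriv hV hW hρ)
    simpa [Complex.real_smul, Function.comp_def] using h
  rw [hfun]
  exact (hφ.mul hg).deriv

theorem WRR {ρ : ℝ} (hρ : 0 < ρ) :
    deriv (fun t : ℝ => (t : ℂ) * deriv (fun r' => W x u ξ r') t) ρ
      = (1 : ℂ) * (((α * ρ ^ (α - 1) : ℝ) : ℂ) * unc V ((fun i => x i / Real.sqrt 2), (fun i => u i / Real.sqrt 2), ξ / 2, Real.sqrt (2 * ρ)) + ((ρ ^ α : ℝ) : ℂ) * ((((Real.sqrt (2 * ρ))⁻¹ : ℝ) : ℂ) * D1 (unc V) ((fun i => x i / Real.sqrt 2), (fun i => u i / Real.sqrt 2), ξ / 2, Real.sqrt (2 * ρ)) er)) + (ρ : ℂ) * (((α * ((α - 1) * ρ ^ (α - 1 - 1)) : ℝ) : ℂ) * unc V ((fun i => x i / Real.sqrt 2), (fun i => u i / Real.sqrt 2), ξ / 2, Real.sqrt (2 * ρ)) + ((α * ρ ^ (α - 1) : ℝ) : ℂ) * ((((Real.sqrt (2 * ρ))⁻¹ : ℝ) : ℂ) * D1 (unc V) ((fun i =>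 x i / Real.sqrt 2), (fun i => u i / Real.sqrt 2), ξ / 2, Real.sqrt (2 * ρ)) er) + (((α * ρ ^ (α - 1) : ℝ) : ℂ) * ((((Real.sqrt (2 * ρ))⁻¹ : ℝ) : ℂ) * D1 (unc V) ((fun i => x i / Real.sqrt 2), (fun i => u i / Real.sqrt 2), ξ / 2, Real.sqrt (2 * ρ)) er) + ((ρ ^ α : ℝ) : ℂ) * (((-(Real.sqrt (2 * ρ))⁻¹ / Real.sqrt (2 * ρ) ^ 2 : ℝ) : ℂ) * D1 (unc V) ((fun i => x i / Real.sqrt 2), (fun i => u i / Real.sqrt 2), ξ / 2, Real.sqrt (2 * ρ)) er + (((Real.sqrt (2 * ρ))⁻¹ : ℝ) : ℂ) * ((((Real.sqrt (2 * ρ))⁻¹ : ℝ) : ℂ) * D2 (unc V) ((fun i => x i / Real.sqrt 2), (fun i => u i / Real.sqrt 2), ξ / 2, Real.sqrt (2 * ρ)) er er)))) := by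
  have hr : 0 < Real.sqrt (2 * ρ) := Real.sqrt_pos.2 (by linarith)
  have hq := sqrt2mul_hasDeriv hV hW hρ
  have hev : (fun t : ℝ => (t : ℂ) * deriv (fun r' => W x u ξ r') t)
      =ᶠ[nhds ρ] fun t => (t : ℂ) *
        (((α * t ^ (α - 1) : ℝ) : ℂ) *
            unc V ((fun i => x i / Real.sqrt 2), (fun i => u i / Real.sqrt 2), ξ / 2,
              Real.sqrt (2 * t))
          + ((t ^ α : ℝ) : ℂ) * ((((Real.sqrt (2 * t))⁻¹ : ℝ) : ℂ) *
              D1 (unc V) ((fun i => x i / Real.sqrt 2), (fun i => u i / Real.sqrt 2), ξ / 2,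
                Real.sqrt (2 * t)) er)) := by
    filter_upwards [Ioi_mem_nhds hρ] with t ht
    rw [WR hV hW x u ξ ht]
  rw [hev.deriv_eq]
  have hid : HasDerivAt (fun t : ℝ => (t : ℂ)) 1 ρ := by
    simpa using (hasDerivAt_id ρ).ofReal_comp
  have hA1 : HasDerivAt (fun t : ℝ => ((α * t ^ (α - 1) : ℝ) : ℂ))
      (((α * ((α - 1) * ρ ^ (α - 1 - 1)) : ℝ) : ℂ)) ρ :=
    ((Real.hasDerivAt_rpow_const (Or.inl hρ.ne')).const_mul α).ofReal_comp
  have hA2 : HasDerivAt (fun t : ℝ => ((t ^ α : ℝ) : ℂ)) (((α * ρ ^ (α - 1) : ℝ) : ℂ)) ρ :=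
    (Real.hasDerivAt_rpow_const (Or.inl hρ.ne')).ofReal_comp
  have hA3 : HasDerivAt (fun t : ℝ => (((Real.sqrt (2 * t))⁻¹ : ℝ) : ℂ))
      (((-(Real.sqrt (2 * ρ))⁻¹ / (Real.sqrt (2 * ρ)) ^ 2 : ℝ) : ℂ)) ρ :=
    (hq.inv hr.ne').ofReal_comp
  have hginner : HasDerivAt
      (fun y => unc V ((fun i => x i / Real.sqrt 2), (fun i => u i / Real.sqrt 2), ξ / 2, y))
      (D1 (unc V) ((fun i => x i / Real.sqrt 2), (fun i => u i / Real.sqrt 2), ξ / 2,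
        Real.sqrt (2 * ρ)) er) (Real.sqrt (2 * ρ)) := by
    have h := hdR hV 1 1 (fun i => x i / Real.sqrt 2) (fun i => u i / Real.sqrt 2) (ξ / 2)
      (t₀ := Real.sqrt (2 * ρ)) (by simpa using hr)
    simpa using h
  have hg : HasDerivAt
      (fun t => unc V ((fun i => x i / Real.sqrt 2), (fun i => u i / Real.sqrt 2), ξ / 2,
        Real.sqrt (2 * t)))
      ((((Real.sqrt (2 * ρ))⁻¹ : ℝ) : ℂ) *
        D1 (unc V) ((fun i => x i / Real.sqrt 2), (fun i => u i / Real.sqrt 2), ξ / 2,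
          Real.sqrt (2 * ρ)) er) ρ := by
    have h := hginner.scomp ρ hq
    simpa [Complex.real_smul, Function.comp_def] using h
  have hBinner : HasDerivAt
      (fun y => D1 (unc V) ((fun i => x i / Real.sqrt 2), (fun i => u i / Real.sqrt 2), ξ / 2, y) er)
      (D2 (unc V) ((fun i => x i / Real.sqrt 2), (fun i => u i / Real.sqrt 2), ξ / 2,
        Real.sqrt (2 * ρ)) er er) (Real.sqrt (2 * ρ)) := by
    have h := hdR_D1 hV 1 1 er (fun i => x i / Real.sqrt 2) (fun i => u i / Real.sqrt 2) (ξ / 2)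
      (t₀ := Real.sqrt (2 * ρ)) (by simpa using hr)
    simpa using h
  have hB : HasDerivAt
      (fun t => D1 (unc V) ((fun i => x i / Real.sqrt 2), (fun i => u i / Real.sqrt 2), ξ / 2,
        Real.sqrt (2 * t)) er)
      ((((Real.sqrt (2 * ρ))⁻¹ : ℝ) : ℂ) *
        D2 (unc V) ((fun i => x i / Real.sqrt 2), (fun i => u i / Real.sqrt 2), ξ / 2,
          Real.sqrt (2 * ρ)) er er) ρ := by
    have h := hBinner.scomp ρ hq
    simpa [Complex.real_smul, Function.comp_def] using h
  have hH := (hA1.mul hg).add (hA2.mul (hA3.mul hB))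
  exact (hid.mul hH).deriv

end WRad

/-- D-form of the U-equation LHS. -/
def ED (s : ℝ) (V : (Fin n → ℝ) → (Fin n → ℝ) → ℝ → ℝ → ℂ)
    (x u : Fin n → ℝ) (ξ ρ : ℝ) : ℂ :=
  ((∑ j, D2 (unc V) (x, u, ξ, ρ) (ex j) (ex j)) +
      (∑ j, D2 (unc V) (x, u, ξ, ρ) (eu j) (eu j)) +
      ((((1 : ℝ) / 4) * ((∑ j, x j ^ 2) + ∑ j, u j ^ 2) : ℝ) : ℂ) *
        D2 (unc V) (x, u, ξ, ρ) ee ee +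
      ∑ j, ((u j : ℂ) * D2 (unc V) (x, u, ξ, ρ) (ex j) ee -
        (x j : ℂ) * D2 (unc V) (x, u, ξ, ρ) (eu j) ee)) +
    D2 (unc V) (x, u, ξ, ρ) er er +
    (((1 - 2 * s) / ρ : ℝ) : ℂ) * D1 (unc V) (x, u, ξ, ρ) er +
    ((((1 : ℝ) / 4) * ρ ^ 2 : ℝ) : ℂ) * D2 (unc V) (x, u, ξ, ρ) ee ee

theorem EU_eq_ED {V : (Fin n → ℝ) → (Fin n → ℝ) → ℝ → ℝ → ℂ}
    (hV : ∀ p : En n, 0 < p.2.2.2 → ContDiffAt ℝ (⊤ : ℕ∞) (unc V) p)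
    (s : ℝ) (x u : Fin n → ℝ) (ξ : ℝ) {ρ : ℝ} (hρ : 0 < ρ) :
    minusSubLap n V x u ξ ρ +
        deriv (fun r => deriv (fun r' => V x u ξ r') r) ρ +
        (((1 - 2 * s) / ρ : ℝ) : ℂ) * deriv (fun r => V x u ξ r) ρ +
        ((((1 : ℝ) / 4) * ρ ^ 2 : ℝ) : ℂ) *
          deriv (fun t => deriv (fun t' => V x u t' ρ) t) ξ = ED s V x u ξ ρ := by
  have htw : (∑ j, ((u j : ℂ) *
        deriv (fun t => deriv (fun τ => V (Function.update x j t) u τ ρ) ξ) (x j) -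
        (x j : ℂ) *
        deriv (fun t => deriv (fun τ => V x (Function.update u j t) τ ρ) ξ) (u j)))
      = ∑ j, ((u j : ℂ) * D2 (unc V) (x, u, ξ, ρ) (ex j) ee -
        (x j : ℂ) * D2 (unc V) (x, u, ξ, ρ) (eu j) ee) :=
    Finset.sum_congr rfl (fun j _ => by rw [dXE hV x u ξ hρ j, dUE hV x u ξ hρ j])
  rw [minusSubLap, ED, dRR hV x u ξ hρ, dR hV x u ξ hρ, dEE hV x u ξ hρ,
    Finset.sum_congr rfl (fun j _ => dXX hV x u ξ hρ j),
    Finset.sum_congr rfl (fun j _ => dUU hV x u ξ hρ j), htw]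

set_option maxHeartbeats 2000000 in
theorem key {V : (Fin n → ℝ) → (Fin n → ℝ) → ℝ → ℝ → ℂ}
    (hV : ∀ p : En n, 0 < p.2.2.2 → ContDiffAt ℝ (⊤ : ℕ∞) (unc V) p)
    {W : (Fin n → ℝ) → (Fin n → ℝ) → ℝ → ℝ → ℂ} {α : ℝ}
    (hW : ∀ (x u : Fin n → ℝ) (ξ ρ : ℝ),
      W x u ξ ρ = ((ρ ^ α : ℝ) : ℂ) *
        V (fun j => x j / Real.sqrt 2) (fun j => u j / Real.sqrt 2) (ξ / 2)
          (Real.sqrt (2 * ρ)))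
    {s : ℝ} (hα : α = ((n : ℝ) + 1 - s) / 2)
    (x u : Fin n → ℝ) (ξ : ℝ) {ρ : ℝ} (hρ : 0 < ρ) :
    deltaS n W x u ξ ρ
      = ((ρ ^ α : ℝ) : ℂ) * (((ρ / 2 : ℝ) : ℂ) *
          ED s V (fun i => x i / Real.sqrt 2) (fun i => u i / Real.sqrt 2) (ξ / 2)
            (Real.sqrt (2 * ρ))
        + ((α * (α - ((n : ℝ) + 1)) : ℝ) : ℂ) *
          V (fun i => x i / Real.sqrt 2) (fun i => u i / Real.sqrt 2) (ξ / 2)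
            (Real.sqrt (2 * ρ))) := by
  have hr : 0 < Real.sqrt (2 * ρ) := Real.sqrt_pos.2 (by linarith)
  have hrne : Real.sqrt (2 * ρ) ≠ 0 := hr.ne'
  have hsq : Real.sqrt (2 * ρ) ^ 2 = 2 * ρ := Real.sq_sqrt (by linarith)
  have hc2c2 : (((Real.sqrt 2)⁻¹ : ℝ) : ℂ) * (((Real.sqrt 2)⁻¹ : ℝ) : ℂ) = (2 : ℂ)⁻¹ := by
    rw [← Complex.ofReal_mul, ← mul_inv, Real.mul_self_sqrt (by norm_num : (0:ℝ) ≤ 2)]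
    norm_num
  have hSX : (∑ j, ((((ρ ^ α : ℝ) : ℂ) * (((Real.sqrt 2)⁻¹ : ℝ) : ℂ)) *
        ((((Real.sqrt 2)⁻¹ : ℝ) : ℂ) *
          D2 (unc V) ((fun i => x i / Real.sqrt 2), (fun i => u i / Real.sqrt 2), ξ / 2,
            Real.sqrt (2 * ρ)) (ex j) (ex j))))
      = ((ρ ^ α : ℝ) : ℂ) * ((2 : ℂ)⁻¹ *
          ∑ j, D2 (unc V) ((fun i => x i / Real.sqrt 2), (fun i => u i / Real.sqrt 2), ξ / 2,
            Real.sqrt (2 * ρ)) (ex j) (ex j)) := by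
    rw [← Finset.mul_sum, ← Finset.mul_sum]
    linear_combination (((ρ ^ α : ℝ) : ℂ) *
      ∑ j, D2 (unc V) ((fun i => x i / Real.sqrt 2), (fun i => u i / Real.sqrt 2), ξ / 2,
        Real.sqrt (2 * ρ)) (ex j) (ex j)) * hc2c2
  have hSU : (∑ j, ((((ρ ^ α : ℝ) : ℂ) * (((Real.sqrt 2)⁻¹ : ℝ) : ℂ)) *
        ((((Real.sqrt 2)⁻¹ : ℝ) : ℂ) *
          D2 (unc V) ((fun i => x i / Real.sqrt 2), (fun i => u i / Real.sqrt 2), ξ / 2,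
            Real.sqrt (2 * ρ)) (eu j) (eu j))))
      = ((ρ ^ α : ℝ) : ℂ) * ((2 : ℂ)⁻¹ *
          ∑ j, D2 (unc V) ((fun i => x i / Real.sqrt 2), (fun i => u i / Real.sqrt 2), ξ / 2,
            Real.sqrt (2 * ρ)) (eu j) (eu j)) := by
    rw [← Finset.mul_sum, ← Finset.mul_sum]
    linear_combination (((ρ ^ α : ℝ) : ℂ) *
      ∑ j, D2 (unc V) ((fun i => x i / Real.sqrt 2), (fun i => u i / Real.sqrt 2), ξ / 2,
        Real.sqrt (2 * ρ)) (eu j) (eu j)) * hc2c2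
  have hTW1 : (∑ j, ((u j : ℂ) *
        deriv (fun t => deriv (fun τ => W (Function.update x j t) u τ ρ) ξ) (x j) -
        (x j : ℂ) *
        deriv (fun t => deriv (fun τ => W x (Function.update u j t) τ ρ) ξ) (u j)))
      = ∑ j, ((u j : ℂ) * ((((ρ ^ α : ℝ) : ℂ) * (((2 : ℝ)⁻¹ : ℝ) : ℂ)) *
            ((((Real.sqrt 2)⁻¹ : ℝ) : ℂ) *
              D2 (unc V) ((fun i => x i / Real.sqrt 2), (fun i => u i / Real.sqrt 2), ξ / 2,
                Real.sqrt (2 * ρ)) (ex j) ee)) -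
          (x j : ℂ) * ((((ρ ^ α : ℝ) : ℂ) * (((2 : ℝ)⁻¹ : ℝ) : ℂ)) *
            ((((Real.sqrt 2)⁻¹ : ℝ) : ℂ) *
              D2 (unc V) ((fun i => x i / Real.sqrt 2), (fun i => u i / Real.sqrt 2), ξ / 2,
                Real.sqrt (2 * ρ)) (eu j) ee))) :=
    Finset.sum_congr rfl (fun j _ => by
      rw [WXE hV hW x u ξ hρ j, WUE hV hW x u ξ hρ j])
  have hTW2 : (∑ j, ((u j : ℂ) * ((((ρ ^ α : ℝ) : ℂ) * (((2 : ℝ)⁻¹ : ℝ) : ℂ)) *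
            ((((Real.sqrt 2)⁻¹ : ℝ) : ℂ) *
              D2 (unc V) ((fun i => x i / Real.sqrt 2), (fun i => u i / Real.sqrt 2), ξ / 2,
                Real.sqrt (2 * ρ)) (ex j) ee)) -
          (x j : ℂ) * ((((ρ ^ α : ℝ) : ℂ) * (((2 : ℝ)⁻¹ : ℝ) : ℂ)) *
            ((((Real.sqrt 2)⁻¹ : ℝ) : ℂ) *
              D2 (unc V) ((fun i => x i / Real.sqrt 2), (fun i => u i / Real.sqrt 2), ξ / 2,
                Real.sqrt (2 * ρ)) (eu j) ee))))
      = ((ρ ^ α : ℝ) : ℂ) * ((2 : ℂ)⁻¹ *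
          ∑ j, (((u j / Real.sqrt 2 : ℝ) : ℂ) *
              D2 (unc V) ((fun i => x i / Real.sqrt 2), (fun i => u i / Real.sqrt 2), ξ / 2,
                Real.sqrt (2 * ρ)) (ex j) ee -
            ((x j / Real.sqrt 2 : ℝ) : ℂ) *
              D2 (unc V) ((fun i => x i / Real.sqrt 2), (fun i => u i / Real.sqrt 2), ξ / 2,
                Real.sqrt (2 * ρ)) (eu j) ee)) := by
    rw [Finset.mul_sum, Finset.mul_sum]
    refine Finset.sum_congr rfl (fun j _ => ?_)
    push_cast
    ring
  have hcoef : ((1 : ℝ) / 4) * ((∑ j, (x j / Real.sqrt 2) ^ 2) + ∑ j, (u j / Real.sqrt 2) ^ 2)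
      = ((1 : ℝ) / 8) * ((∑ j, x j ^ 2) + ∑ j, u j ^ 2) := by
    have hx2 : ∀ y : ℝ, (y / Real.sqrt 2) ^ 2 = y ^ 2 * (1 / 2) := fun y => by
      rw [div_pow, Real.sq_sqrt (by norm_num : (0:ℝ) ≤ 2)]; ring
    simp only [hx2, ← Finset.sum_mul]
    ring
  have hα1 : ρ ^ (α - 1) = ρ ^ α * ρ⁻¹ := by
    rw [Real.rpow_sub hρ, Real.rpow_one, div_eq_mul_inv]
  have hα2 : ρ ^ (α - 1 - 1) = ρ ^ α * ρ⁻¹ * ρ⁻¹ := by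
    rw [Real.rpow_sub hρ, Real.rpow_one, div_eq_mul_inv, hα1]
  have hρC : (ρ : ℂ) = (Real.sqrt (2 * ρ) : ℂ) ^ 2 / 2 := by
    rw [← Complex.ofReal_pow, hsq]
    push_cast; ring
  have hRneC : (Real.sqrt (2 * ρ) : ℂ) ≠ 0 := Complex.ofReal_ne_zero.2 hrne
  rw [deltaS, minusSubLap,
    Finset.sum_congr rfl (fun j _ => WXX hV hW x u ξ hρ j),
    Finset.sum_congr rfl (fun j _ => WUU hV hW x u ξ hρ j),
    WR hV hW x u ξ hρ, WRR hV hW x u ξ hρ]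
  simp only [WEE hV hW x u ξ hρ]
  rw [hSX, hSU, hTW1, hTW2, ED]
  beta_reduce
  rw [hcoef, hsq, hα2, hα1, hα]
  simp only [unc_apply]
  push_cast
  obtain ⟨SX, hSXg⟩ : ∃ z, (∑ j, D2 (unc V) ((fun i => x i / Real.sqrt 2), (fun i => u i / Real.sqrt 2), ξ / 2, Real.sqrt (2 * ρ)) (ex j) (ex j)) = z := ⟨_, rfl⟩
  rw [hSXg]
  obtain ⟨SU, hSUg⟩ : ∃ z, (∑ j, D2 (unc V) ((fun i => x i / Real.sqrt 2), (fun i => u i / Real.sqrt 2), ξ / 2, Real.sqrt (2 * ρ)) (eu j) (eu j)) = z := ⟨_, rfl⟩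
  rw [hSUg]
  obtain ⟨TS, hTSg⟩ : ∃ z, (∑ j, (((u j : ℝ) : ℂ) / ((Real.sqrt 2 : ℝ) : ℂ) *
      D2 (unc V) ((fun i => x i / Real.sqrt 2), (fun i => u i / Real.sqrt 2), ξ / 2, Real.sqrt (2 * ρ)) (ex j) ee -
      ((x j : ℝ) : ℂ) / ((Real.sqrt 2 : ℝ) : ℂ) *
      D2 (unc V) ((fun i => x i / Real.sqrt 2), (fun i => u i / Real.sqrt 2), ξ / 2, Real.sqrt (2 * ρ)) (eu j) ee)) = z := ⟨_, rfl⟩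
  rw [hTSg]
  obtain ⟨QX, hQXg⟩ : ∃ z, (∑ j, ((x j : ℝ) : ℂ) ^ 2) = z := ⟨_, rfl⟩
  rw [hQXg]
  obtain ⟨QU, hQUg⟩ : ∃ z, (∑ j, ((u j : ℝ) : ℂ) ^ 2) = z := ⟨_, rfl⟩
  rw [hQUg]
  obtain ⟨SEE, hSEEg⟩ : ∃ z, D2 (unc V) ((fun i => x i / Real.sqrt 2), (fun i => u i / Real.sqrt 2), ξ / 2, Real.sqrt (2 * ρ)) ee ee = z := ⟨_, rfl⟩
  rw [hSEEg]
  obtain ⟨CC, hCCg⟩ : ∃ z, D2 (unc V) ((fun i => x i / Real.sqrt 2), (fun i => u i / Real.sqrt 2), ξ / 2, Real.sqrt (2 * ρ)) er er = z := ⟨_, rfl⟩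
  rw [hCCg]
  obtain ⟨BB, hBBg⟩ : ∃ z, D1 (unc V) ((fun i => x i / Real.sqrt 2), (fun i => u i / Real.sqrt 2), ξ / 2, Real.sqrt (2 * ρ)) er = z := ⟨_, rfl⟩
  rw [hBBg]
  obtain ⟨AA, hAAg⟩ : ∃ z, V (fun i => x i / Real.sqrt 2) (fun i => u i / Real.sqrt 2) (ξ / 2)
      (Real.sqrt (2 * ρ)) = z := ⟨_, rfl⟩
  rw [hAAg]
  obtain ⟨PP, hPPg⟩ : ∃ z, ((ρ ^ (((n : ℝ) + 1 - s) / 2) : ℝ) : ℂ) = z := ⟨_, rfl⟩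
  rw [hPPg]
  simp only [div_eq_mul_inv, mul_inv]
  have hρcne : (ρ : ℂ) ≠ 0 := Complex.ofReal_ne_zero.2 hρ.ne'
  have h1 : (ρ : ℂ) * (ρ : ℂ)⁻¹ = 1 := mul_inv_cancel₀ hρcne
  have h2 : ((Real.sqrt (2 * ρ) : ℝ) : ℂ) * ((Real.sqrt (2 * ρ) : ℝ) : ℂ)⁻¹ = 1 :=
    mul_inv_cancel₀ hRneC
  have h3 : ((Real.sqrt (2 * ρ) : ℝ) : ℂ) * ((Real.sqrt (2 * ρ) : ℝ) : ℂ) = 2 * (ρ : ℂ) := by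
    rw [← Complex.ofReal_mul, Real.mul_self_sqrt (by linarith)]
    push_cast; ring
  obtain ⟨Ri, hRig⟩ : ∃ z, ((Real.sqrt (2 * ρ) : ℝ) : ℂ)⁻¹ = z := ⟨_, rfl⟩
  rw [hRig] at h2 ⊢
  obtain ⟨R, hRg⟩ : ∃ z, ((Real.sqrt (2 * ρ) : ℝ) : ℂ) = z := ⟨_, rfl⟩
  rw [hRg] at h2 h3
  obtain ⟨ri, hrig⟩ : ∃ z, ((ρ : ℝ) : ℂ)⁻¹ = z := ⟨_, rfl⟩
  rw [hrig] at h1 ⊢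
  obtain ⟨rc, hrcg⟩ : ∃ z, ((ρ : ℝ) : ℂ) = z := ⟨_, rfl⟩
  rw [hrcg] at h1 h3 ⊢
  linear_combination ((-1/4 : ℂ) * PP * AA + (1/4 : ℂ) * PP * AA * (s:ℂ)^2 + (-1/2 : ℂ) * PP * AA * (n:ℂ) + (-1/4 : ℂ) * PP * AA * (n:ℂ)^2 + (1/2 : ℂ) * rc * Ri * PP * BB + (-1 : ℂ) * rc * Ri * PP * BB * (s:ℂ) + rc * Ri * PP * BB * (n:ℂ) + (-1/4 : ℂ) * rc * ri * PP * AA + (1/4 : ℂ) * rc * ri * PP * AA * (s:ℂ)^2 + (-1/2 : ℂ) * rc * ri * PP * AA * (n:ℂ) * (s:ℂ) + (1/4 : ℂ) * rc * ri * PP * AA * (n:ℂ)^2) * h1 + ((1/2 : ℂ) * rc * PP * CC + (1/2 : ℂ) * rc * R * Ri * PP * CC) * h2 + ((-1/2 : ℂ) * rc * Ri^2 * PP * CC) * h3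

end Stmt6

end

open Stmt6 in
/-- with `W(x,u,ξ,ρ) = ρ^{(n+1−s)/2} U(x/√2, u/√2, ξ/2, √(2ρ))` and
`γ = (n+1+s)/2`, `W` satisfies `−Δ_S W = γ(n+1−γ)W` iff `U` satisfies
`−𝓛U + ∂_ρ²U + ((1−2s)/ρ)∂_ρU + (1/4)ρ²∂_ξ²U = 0`. -/
theorem stmt_6 (n : ℕ) (hn : 1 ≤ n) (s γ : ℝ) (hs : 0 < s) (hγ : γ = ((n : ℝ) + 1 + s) / 2)
    (U : (Fin n → ℝ) → (Fin n → ℝ) → ℝ → ℝ → ℂ)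
    (hU : ContDiffOn ℝ (⊤ : ℕ∞)
      (fun p : (Fin n → ℝ) × (Fin n → ℝ) × ℝ × ℝ => U p.1 p.2.1 p.2.2.1 p.2.2.2)
      (Set.univ ×ˢ Set.univ ×ˢ Set.univ ×ˢ Set.Ioi (0 : ℝ)))
    (W : (Fin n → ℝ) → (Fin n → ℝ) → ℝ → ℝ → ℂ)
    (hW : ∀ (x u : Fin n → ℝ) (ξ ρ : ℝ),
      W x u ξ ρ = ((ρ ^ (((n : ℝ) + 1 - s) / 2) : ℝ) : ℂ) *
        U (fun j => x j / Real.sqrt 2) (fun j => u j / Real.sqrt 2) (ξ / 2)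
          (Real.sqrt (2 * ρ))) :
    (∀ (x u : Fin n → ℝ) (ξ ρ : ℝ), 0 < ρ →
      -(deltaS n W x u ξ ρ) = ((γ * ((n : ℝ) + 1 - γ) : ℝ) : ℂ) * W x u ξ ρ) ↔
    (∀ (x u : Fin n → ℝ) (ξ ρ : ℝ), 0 < ρ →
      minusSubLap n U x u ξ ρ +
          deriv (fun r => deriv (fun r' => U x u ξ r') r) ρ +
          (((1 - 2 * s) / ρ : ℝ) : ℂ) * deriv (fun r => U x u ξ r) ρ +
          ((((1 : ℝ) / 4) * ρ ^ 2 : ℝ) : ℂ) *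
            deriv (fun t => deriv (fun t' => U x u t' ρ) t) ξ = 0) := by
  have hV : ∀ p : En n, 0 < p.2.2.2 → ContDiffAt ℝ (⊤ : ℕ∞) (unc U) p := by
    intro p hp
    have hopen : IsOpen ((Set.univ : Set (Fin n → ℝ)) ×ˢ (Set.univ : Set (Fin n → ℝ)) ×ˢ
        (Set.univ : Set ℝ) ×ˢ Set.Ioi (0 : ℝ)) :=
      isOpen_univ.prod (isOpen_univ.prod (isOpen_univ.prod isOpen_Ioi))
    exact hU.contDiffAt (hopen.mem_nhds ⟨Set.mem_univ _, Set.mem_univ _, Set.mem_univ _, hp⟩)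
  have hgc : ((γ * ((n : ℝ) + 1 - γ) : ℝ) : ℂ) =
      -(((((n : ℝ) + 1 - s) / 2 * (((n : ℝ) + 1 - s) / 2 - ((n : ℝ) + 1)) : ℝ)) : ℂ) := by
    rw [hγ]; push_cast; ring
  constructor
  · intro h X Uu Ξ R hR
    rw [EU_eq_ED hV s X Uu Ξ hR]
    have hρ0 : (0 : ℝ) < R ^ 2 / 2 := by positivity
    have hrX : (fun i => Real.sqrt 2 * X i / Real.sqrt 2) = X := by
      funext i
      exact mul_div_cancel_left₀ _ (by positivity : Real.sqrt 2 ≠ 0)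
    have hrU : (fun i => Real.sqrt 2 * Uu i / Real.sqrt 2) = Uu := by
      funext i
      exact mul_div_cancel_left₀ _ (by positivity : Real.sqrt 2 ≠ 0)
    have hrs : Real.sqrt (2 * (R ^ 2 / 2)) = R := by
      rw [show 2 * (R ^ 2 / 2) = R ^ 2 by ring, Real.sqrt_sq hR.le]
    have hξ : 2 * Ξ / 2 = Ξ := by ring
    have hk := key hV hW rfl (fun i => Real.sqrt 2 * X i) (fun i => Real.sqrt 2 * Uu i)
      (2 * Ξ) hρ0
    beta_reduce at hk
    rw [hrX, hrU, hξ, hrs] at hk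
    have hmain := h (fun i => Real.sqrt 2 * X i) (fun i => Real.sqrt 2 * Uu i) (2 * Ξ)
      (R ^ 2 / 2) hρ0
    rw [hk, hW] at hmain
    beta_reduce at hmain
    rw [hrX, hrU, hξ, hrs] at hmain
    have hPneC : (((R ^ 2 / 2) ^ (((n : ℝ) + 1 - s) / 2) : ℝ) : ℂ) ≠ 0 :=
      Complex.ofReal_ne_zero.2 (Real.rpow_pos_of_pos hρ0 _).ne'
    have hcne : ((R ^ 2 / 2 / 2 : ℝ) : ℂ) ≠ 0 := by
      rw [Complex.ofReal_ne_zero]; positivity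
    have hED0 : (((R ^ 2 / 2) ^ (((n : ℝ) + 1 - s) / 2) : ℝ) : ℂ) *
        (((R ^ 2 / 2 / 2 : ℝ) : ℂ) * ED s U X Uu Ξ R) = 0 := by
      linear_combination (-1 : ℂ) * hmain -
        ((((R ^ 2 / 2) ^ (((n : ℝ) + 1 - s) / 2) : ℝ) : ℂ) * U X Uu Ξ R) * hgc
    by_contra hne
    exact (mul_ne_zero hPneC (mul_ne_zero hcne hne)) hED0
  · intro h x u ξ ρ hρ
    have hr : 0 < Real.sqrt (2 * ρ) := Real.sqrt_pos.2 (by linarith)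
    have h0 := h (fun i => x i / Real.sqrt 2) (fun i => u i / Real.sqrt 2) (ξ / 2)
      (Real.sqrt (2 * ρ)) hr
    rw [EU_eq_ED hV s _ _ _ hr] at h0
    rw [key hV hW rfl x u ξ hρ, h0, hW]
    linear_combination (-(((ρ ^ (((n : ℝ) + 1 - s) / 2) : ℝ) : ℂ) *
      U (fun i => x i / Real.sqrt 2) (fun i => u i / Real.sqrt 2) (ξ / 2)
        (Real.sqrt (2 * ρ)))) * hgc
end

section
/- Let n ≥ 1, s > 0 and ρ > 0. On the domain D = {(z,w,ζ) ∈ ℂⁿ × ℂⁿ × ℂ : |Im z|² + |Im w|² + 4|Im ζ| < ρ²}, setting A = ρ² + Σ_{j=1}^n z_j² + Σ_{j=1}^n w_j², both A + 4iζ and A − 4iζ have strictly positive real part; consequently A² + 16ζ² never lies in the half-line (−∞,0], and the function (z,w,ζ) ↦ (A² + 16ζ²)^{−(n+1+s)/2}, defined via the principal branch of the complex power, is holomorphic on D and restricts at real points (x,u,ξ) to ((ρ² + |x|² + |u|²)² + 16ξ²)^{−(n+1+s)/2}. -/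
/-!
Writing `A = ρ² + Σ zⱼ² + Σ wⱼ²`, we have `Re A ≥ ρ² - |Im z|² - |Im w|² > 4|Im ζ|`, so both
factors of `A² + 16ζ² = (A + 4iζ)(A - 4iζ)` lie in the open right half-plane. A product of two
such numbers is never in `(-∞, 0]`, so the principal power is holomorphic there, and at real
points the base is a nonnegative real, where the complex and real powers agree.
-/

open Complex

namespace Complex

theorem mul_mem_slitPlane_of_re_pos {a b : ℂ} (ha : 0 < a.re) (hb : 0 < b.re) :
    a * b ∈ slitPlane := by
  refine mem_slitPlane_iff.mpr (or_iff_not_imp_right.mpr fun him => ?_)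
  rw [not_not, mul_im] at him
  have key : a.re * (a * b).re = (a.re ^ 2 + a.im ^ 2) * b.re := by
    rw [mul_re]; linear_combination (-a.im) * him
  have : 0 < a.re * (a * b).re := key ▸ mul_pos (by positivity) hb
  exact pos_of_mul_pos_right this ha.le

theorem neg_sum_im_sq_le_re_sum_sq {ι : Type*} (s : Finset ι) (z : ι → ℂ) :
    -∑ j ∈ s, (z j).im ^ 2 ≤ (∑ j ∈ s, z j ^ 2).re := by
  rw [re_sum, ← Finset.sum_neg_distrib]
  refine Finset.sum_le_sum fun j _ => ?_
  rw [sq (z j), mul_re]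
  nlinarith [sq_nonneg (z j).re]

theorem sq_add_sixteen_mul_sq (A ζ : ℂ) :
    A ^ 2 + 16 * ζ ^ 2 = (A + 4 * I * ζ) * (A - 4 * I * ζ) := by
  linear_combination (16 * ζ ^ 2) * I_sq

theorem re_add_four_I_mul_pos_and_re_sub_pos {A ζ : ℂ} (h : 4 * |ζ.im| < A.re) :
    0 < (A + 4 * I * ζ).re ∧ 0 < (A - 4 * I * ζ).re := by
  have hre : (4 * I * ζ).re = -4 * ζ.im := by simp [mul_re]
  rw [add_re, sub_re, hre]
  constructor <;> linarith [le_abs_self ζ.im, neg_abs_le ζ.im]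

end Complex

section

variable {ι : Type*} [Fintype ι]

theorem four_mul_abs_im_lt_re {ρ : ℝ} {z w : ι → ℂ} {ζ : ℂ}
    (h : (∑ j, (z j).im ^ 2) + (∑ j, (w j).im ^ 2) + 4 * |ζ.im| < ρ ^ 2) :
    4 * |ζ.im| < ((ρ : ℂ) ^ 2 + ∑ j, z j ^ 2 + ∑ j, w j ^ 2).re := by
  have hρ : ((ρ : ℂ) ^ 2).re = ρ ^ 2 := by rw [← ofReal_pow, ofReal_re]
  rw [add_re, add_re, hρ]
  linarith [neg_sum_im_sq_le_re_sum_sq Finset.univ z, neg_sum_im_sq_le_re_sum_sq Finset.univ w]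

theorem sq_add_sixteen_mul_sq_mem_slitPlane {ρ : ℝ} {z w : ι → ℂ} {ζ : ℂ}
    (h : (∑ j, (z j).im ^ 2) + (∑ j, (w j).im ^ 2) + 4 * |ζ.im| < ρ ^ 2) :
    ((ρ : ℂ) ^ 2 + ∑ j, z j ^ 2 + ∑ j, w j ^ 2) ^ 2 + 16 * ζ ^ 2 ∈ slitPlane := by
  obtain ⟨hplus, hminus⟩ := re_add_four_I_mul_pos_and_re_sub_pos (four_mul_abs_im_lt_re h)
  rw [sq_add_sixteen_mul_sq]
  exact mul_mem_slitPlane_of_re_pos hplus hminus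

end

theorem stmt_8_general (n : ℕ) (s ρ : ℝ) :
    (∀ (z w : Fin n → ℂ) (ζ : ℂ),
      (∑ j, (z j).im ^ 2) + (∑ j, (w j).im ^ 2) + 4 * |ζ.im| < ρ ^ 2 →
      0 < (((ρ : ℂ) ^ 2 + ∑ j, z j ^ 2 + ∑ j, w j ^ 2) + 4 * Complex.I * ζ).re ∧
      0 < (((ρ : ℂ) ^ 2 + ∑ j, z j ^ 2 + ∑ j, w j ^ 2) - 4 * Complex.I * ζ).re ∧
      ((ρ : ℂ) ^ 2 + ∑ j, z j ^ 2 + ∑ j, w j ^ 2) ^ 2 + 16 * ζ ^ 2 ∈ Complex.slitPlane) ∧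
    DifferentiableOn ℂ
      (fun p : (Fin n → ℂ) × (Fin n → ℂ) × ℂ =>
        (((ρ : ℂ) ^ 2 + ∑ j, p.1 j ^ 2 + ∑ j, p.2.1 j ^ 2) ^ 2 + 16 * p.2.2 ^ 2) ^
          (-(((n : ℂ) + 1 + s) / 2)))
      {p : (Fin n → ℂ) × (Fin n → ℂ) × ℂ |
        (∑ j, (p.1 j).im ^ 2) + (∑ j, (p.2.1 j).im ^ 2) + 4 * |p.2.2.im| < ρ ^ 2} ∧
    ∀ (x u : Fin n → ℝ) (ξ : ℝ),
      (((ρ : ℂ) ^ 2 + ∑ j, (x j : ℂ) ^ 2 + ∑ j, (u j : ℂ) ^ 2) ^ 2 + 16 * (ξ : ℂ) ^ 2) ^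
          (-(((n : ℂ) + 1 + s) / 2))
        = ((((ρ ^ 2 + (∑ j, x j ^ 2) + ∑ j, u j ^ 2) ^ 2 + 16 * ξ ^ 2) ^
            (-(((n : ℝ) + 1 + s) / 2)) : ℝ) : ℂ) := by
  refine ⟨fun z w ζ h => ?_, fun p hp => ?_, fun x u ξ => ?_⟩
  · obtain ⟨hplus, hminus⟩ := re_add_four_I_mul_pos_and_re_sub_pos (four_mul_abs_im_lt_re h)
    exact ⟨hplus, hminus, sq_add_sixteen_mul_sq_mem_slitPlane h⟩
  · have hbase : DifferentiableAt ℂ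
        (fun p : (Fin n → ℂ) × (Fin n → ℂ) × ℂ =>
          ((ρ : ℂ) ^ 2 + ∑ j, p.1 j ^ 2 + ∑ j, p.2.1 j ^ 2) ^ 2 + 16 * p.2.2 ^ 2) p := by
      fun_prop
    exact (hbase.cpow (differentiableAt_const _)
      (sq_add_sixteen_mul_sq_mem_slitPlane hp)).differentiableWithinAt
  · have hbase : 0 ≤ (ρ ^ 2 + (∑ j, x j ^ 2) + ∑ j, u j ^ 2) ^ 2 + 16 * ξ ^ 2 := by positivity
    rw [ofReal_cpow hbase]
    push_cast
    ring_nf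

/-- on `D = {|Im z|² + |Im w|² + 4|Im ζ| < ρ²}`, with
`A = ρ² + Σ z_j² + Σ w_j²`, both `A ± 4iζ` have positive real part, `A² + 16ζ²` avoids
`(−∞,0]`, the principal-branch power `(A²+16ζ²)^{−(n+1+s)/2}` is holomorphic on `D`,
and at real points it equals `((ρ²+|x|²+|u|²)² + 16ξ²)^{−(n+1+s)/2}`. -/
theorem stmt_8 (n : ℕ) (hn : 1 ≤ n) (s ρ : ℝ) (hs : 0 < s) (hρ : 0 < ρ) :
    (∀ (z w : Fin n → ℂ) (ζ : ℂ),
      (∑ j, (z j).im ^ 2) + (∑ j, (w j).im ^ 2) + 4 * |ζ.im| < ρ ^ 2 →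
      0 < (((ρ : ℂ) ^ 2 + ∑ j, z j ^ 2 + ∑ j, w j ^ 2) + 4 * Complex.I * ζ).re ∧
      0 < (((ρ : ℂ) ^ 2 + ∑ j, z j ^ 2 + ∑ j, w j ^ 2) - 4 * Complex.I * ζ).re ∧
      ((ρ : ℂ) ^ 2 + ∑ j, z j ^ 2 + ∑ j, w j ^ 2) ^ 2 + 16 * ζ ^ 2 ∈ Complex.slitPlane) ∧
    DifferentiableOn ℂ
      (fun p : (Fin n → ℂ) × (Fin n → ℂ) × ℂ =>
        (((ρ : ℂ) ^ 2 + ∑ j, p.1 j ^ 2 + ∑ j, p.2.1 j ^ 2) ^ 2 + 16 * p.2.2 ^ 2) ^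
          (-(((n : ℂ) + 1 + s) / 2)))
      {p : (Fin n → ℂ) × (Fin n → ℂ) × ℂ |
        (∑ j, (p.1 j).im ^ 2) + (∑ j, (p.2.1 j).im ^ 2) + 4 * |p.2.2.im| < ρ ^ 2} ∧
    ∀ (x u : Fin n → ℝ) (ξ : ℝ),
      (((ρ : ℂ) ^ 2 + ∑ j, (x j : ℂ) ^ 2 + ∑ j, (u j : ℂ) ^ 2) ^ 2 + 16 * (ξ : ℂ) ^ 2) ^
          (-(((n : ℂ) + 1 + s) / 2))
        = ((((ρ ^ 2 + (∑ j, x j ^ 2) + ∑ j, u j ^ 2) ^ 2 + 16 * ξ ^ 2) ^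
            (-(((n : ℝ) + 1 + s) / 2)) : ℝ) : ℂ) :=
  stmt_8_general n s ρ
end

section
/- Let n ≥ 1 be an integer, let 0 < s ≤ 1/2, and set α = (n+1+s)/2 and β = (n+1−s)/2. There exist constants C > 0 and M > 0, depending only on n and s, such that for every integer k ≥ 0 and every x > 0 with (2k+n)x ≥ M, e^{−x} ∫₀^∞ e^{−2xt} t^{k+α−1} (1+t)^{−(k+β)} dt ≤ C x^{−s} e^{−√((2k+n+1−s) x)}. -/
open MeasureTheory Real Set

/-!
Write `m = k + β`, so that `k + α - 1 = m + s - 1`. Since `t / (1 + t) ≤ exp (-1 / (1 + t))`, the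
integrand times `e^{-x}` is at most `t^{s-1} e^{-xt} exp (-(x (1 + t) + m / (1 + t)))`, and by AM-GM
`x (1 + t) + m / (1 + t) ≥ 2 √(m x) ≥ √(2 m x)`. What is left is the Gamma integral
`∫₀^∞ t^{s-1} e^{-xt} dt = Γ(s) x^{-s}`, so `C = Γ(s)` works.
-/

theorem two_sqrt_mul_le_mul_add_div {a b u : ℝ} (ha : 0 ≤ a) (hb : 0 ≤ b) (hu : 0 < u) :
    2 * √(a * b) ≤ a * u + b / u := by
  have hprod : √(a * u) * √(b / u) = √(a * b) := by
    rw [← sqrt_mul (by positivity)]; congr 1; field_simp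
  have := two_mul_le_add_sq (√(a * u)) (√(b / u))
  rwa [mul_assoc, hprod, sq_sqrt (by positivity), sq_sqrt (by positivity)] at this

theorem div_one_add_rpow_le_exp {t m : ℝ} (ht : 0 ≤ t) (hm : 0 ≤ m) :
    (t / (1 + t)) ^ m ≤ exp (-(m / (1 + t))) := by
  have hbase : t / (1 + t) ≤ exp (-(1 / (1 + t))) := by
    calc t / (1 + t) = -(1 / (1 + t)) + 1 := by field_simp; ring
      _ ≤ _ := add_one_le_exp _
  calc (t / (1 + t)) ^ m ≤ exp (-(1 / (1 + t))) ^ m := by gcongr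
    _ = exp (-(m / (1 + t))) := by rw [← exp_mul]; ring_nf

theorem exp_neg_mul_kernel_le_rpow_mul_exp {m s x t : ℝ} (hm : 0 ≤ m) (hx : 0 ≤ x) (ht : 0 < t) :
    exp (-x) * (exp (-(2 * x * t)) * t ^ (m + (s - 1)) * (1 + t) ^ (-m))
      ≤ exp (-√(2 * m * x)) * (t ^ (s - 1) * exp (-(x * t))) := by
  have ht1 : 0 < 1 + t := by linarith
  have hsqrt : √(2 * m * x) ≤ 2 * √(m * x) :=
    calc √(2 * m * x) ≤ √(2 ^ 2 * (m * x)) := sqrt_le_sqrt (by nlinarith [mul_nonneg hm hx])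
      _ = 2 * √(m * x) := by rw [sqrt_mul (by positivity), sqrt_sq zero_le_two]
  have hamgm := two_sqrt_mul_le_mul_add_div hx hm ht1
  rw [mul_comm x m] at hamgm
  calc exp (-x) * (exp (-(2 * x * t)) * t ^ (m + (s - 1)) * (1 + t) ^ (-m))
      = exp (-x) * exp (-(2 * x * t)) * (t / (1 + t)) ^ m * t ^ (s - 1) := by
        rw [rpow_add ht, rpow_neg ht1.le, div_rpow ht.le ht1.le]; ring
    _ ≤ exp (-x) * exp (-(2 * x * t)) * exp (-(m / (1 + t))) * t ^ (s - 1) := by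
        gcongr; exact div_one_add_rpow_le_exp ht.le hm
    _ ≤ exp (-√(2 * m * x)) * exp (-(x * t)) * t ^ (s - 1) := by
        rw [← exp_add, ← exp_add, ← exp_add]
        gcongr ?_ * _
        exact exp_le_exp.2 (by linarith [show x * (1 + t) = x + x * t by ring])
    _ = _ := by ring

theorem lintegral_rpow_mul_exp_neg_mul_Ioi {s x : ℝ} (hs : 0 < s) (hx : 0 < x) :
    ∫⁻ t in Ioi 0, ENNReal.ofReal (t ^ (s - 1) * exp (-(x * t)))
      = ENNReal.ofReal (x ^ (-s) * Gamma s) := by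
  have hint : IntegrableOn (fun t : ℝ => t ^ (s - 1) * exp (-(x * t))) (Ioi 0) := by
    refine (integrableOn_rpow_mul_exp_neg_mul_rpow (s := s - 1) (p := 1) (by linarith) one_pos
      hx).congr_fun (fun t _ => ?_) measurableSet_Ioi
    simp only [rpow_one, neg_mul]
  have hnonneg : 0 ≤ᵐ[volume.restrict (Ioi 0)] fun t : ℝ => t ^ (s - 1) * exp (-(x * t)) :=
    (ae_restrict_iff' measurableSet_Ioi).2 <| ae_of_all _ fun t ht =>
      mul_nonneg (rpow_nonneg (le_of_lt ht) _) (exp_pos _).le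
  rw [← ofReal_integral_eq_lintegral_ofReal hint hnonneg, integral_rpow_mul_exp_neg_mul_Ioi hs hx,
    one_div, inv_rpow hx.le, rpow_neg hx.le]

theorem lintegral_kernel_le_Gamma_mul {m s x : ℝ} (hm : 0 ≤ m) (hs : 0 < s) (hx : 0 < x) :
    ENNReal.ofReal (exp (-x)) *
        ∫⁻ t in Ioi 0, ENNReal.ofReal (exp (-(2 * x * t)) * t ^ (m + (s - 1)) * (1 + t) ^ (-m))
      ≤ ENNReal.ofReal (Gamma s * x ^ (-s) * exp (-√(2 * m * x))) := by
  rw [← lintegral_const_mul' _ _ ENNReal.ofReal_ne_top]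
  calc ∫⁻ t in Ioi 0, ENNReal.ofReal (exp (-x)) *
          ENNReal.ofReal (exp (-(2 * x * t)) * t ^ (m + (s - 1)) * (1 + t) ^ (-m))
      ≤ ∫⁻ t in Ioi 0, ENNReal.ofReal (exp (-√(2 * m * x))) *
          ENNReal.ofReal (t ^ (s - 1) * exp (-(x * t))) := by
        refine setLIntegral_mono (by fun_prop) fun t ht => ?_
        rw [← ENNReal.ofReal_mul (exp_pos _).le, ← ENNReal.ofReal_mul (exp_pos _).le]
        exact ENNReal.ofReal_le_ofReal (exp_neg_mul_kernel_le_rpow_mul_exp hm hx.le ht)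
    _ = ENNReal.ofReal (Gamma s * x ^ (-s) * exp (-√(2 * m * x))) := by
        rw [lintegral_const_mul' _ _ ENNReal.ofReal_ne_top, lintegral_rpow_mul_exp_neg_mul_Ioi hs hx,
          ← ENNReal.ofReal_mul (exp_pos _).le]
        congr 1; ring

theorem stmt_13_general (n : ℕ) (s : ℝ) (hs0 : 0 < s) (hs : s ≤ 1 / 2) :
    ∃ C > (0 : ℝ), ∃ M > (0 : ℝ), ∀ (k : ℕ) (x : ℝ), 0 < x →
      M ≤ (2 * (k : ℝ) + n) * x →
      ENNReal.ofReal (Real.exp (-x)) *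
          ∫⁻ t in Set.Ioi (0 : ℝ),
            ENNReal.ofReal
              (Real.exp (-(2 * x * t)) * t ^ ((k : ℝ) + ((n : ℝ) + 1 + s) / 2 - 1) *
                (1 + t) ^ (-((k : ℝ) + ((n : ℝ) + 1 - s) / 2)))
        ≤ ENNReal.ofReal
            (C * x ^ (-s) * Real.exp (-Real.sqrt ((2 * (k : ℝ) + (n : ℝ) + 1 - s) * x))) := by
  refine ⟨Gamma s, Gamma_pos_of_pos hs0, 1, one_pos, fun k x hx _ => ?_⟩
  have hm : 0 ≤ (k : ℝ) + ((n : ℝ) + 1 - s) / 2 := by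
    linarith [(k.cast_nonneg : (0 : ℝ) ≤ k), (n.cast_nonneg : (0 : ℝ) ≤ n)]
  rw [show (k : ℝ) + ((n : ℝ) + 1 + s) / 2 - 1 = (k + ((n : ℝ) + 1 - s) / 2) + (s - 1) by ring,
    show (2 * (k : ℝ) + n + 1 - s) * x = 2 * (k + ((n : ℝ) + 1 - s) / 2) * x by ring]
  exact lintegral_kernel_le_Gamma_mul hm hs0 hx

/-- the bound
`e^{−x} ∫₀^∞ e^{−2xt} t^{k+α−1}(1+t)^{−(k+β)} dt ≤ C x^{−s} e^{−√((2k+n+1−s)x)}`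
with `α = (n+1+s)/2`, `β = (n+1−s)/2`, for `(2k+n)x` large. -/
theorem stmt_13 (n : ℕ) (hn : 1 ≤ n) (s : ℝ) (hs0 : 0 < s) (hs : s ≤ 1 / 2) :
    ∃ C > (0 : ℝ), ∃ M > (0 : ℝ), ∀ (k : ℕ) (x : ℝ), 0 < x →
      M ≤ (2 * (k : ℝ) + n) * x →
      ENNReal.ofReal (Real.exp (-x)) *
          ∫⁻ t in Set.Ioi (0 : ℝ),
            ENNReal.ofReal
              (Real.exp (-(2 * x * t)) * t ^ ((k : ℝ) + ((n : ℝ) + 1 + s) / 2 - 1) *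
                (1 + t) ^ (-((k : ℝ) + ((n : ℝ) + 1 - s) / 2)))
        ≤ ENNReal.ofReal
            (C * x ^ (-s) * Real.exp (-Real.sqrt ((2 * (k : ℝ) + (n : ℝ) + 1 - s) * x))) :=
  stmt_13_general n s hs0 hs
end

section
/- Let n ≥ 1 and m ≥ 2 be integers and let s > 0, B > 0 and ξ ∈ ℝ. Then (2π^{(m−1)/2}/Γ((m−1)/2)) ∫_{|ξ|}^∞ (B + 16r²)^{−(n+m+s)/2} (r² − ξ²)^{(m−3)/2} r dr = (π^{(m−1)/2}/4^{m−1}) (Γ((n+1+s)/2)/Γ((n+m+s)/2)) (B + 16ξ²)^{−(n+1+s)/2}. (With B = (ρ² + |x|² + |u|²)², this says that the partial Radon transform in the central variable of the H-type kernel ((ρ²+|x|²+|u|²)² + 16|t|²)^{−(n+m+s)/2}, t ∈ ℝᵐ, equals a constant multiple of the Heisenberg kernel ((ρ²+|x|²+|u|²)² + 16ξ²)^{−(n+1+s)/2}.) -/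
/-!
Substituting `u = r² - ξ²` turns the left-hand integral into
`½ ∫₀^∞ (A + 16u)^(-p) u^(q-1) du` with `A = B + 16ξ²`, `q = (m-1)/2`, `p = (n+m+s)/2`.
Rescaling `u` by `A/16` and then putting `x = 1/(1+u)` reduces this to Euler's Beta integral
`B(p-q, q) = Γ(p-q) Γ(q) / Γ(p)`; the factor `Γ(q)` cancels the prefactor and
`16^(-q) = 4^(-(m-1))`, while `p - q = (n+1+s)/2`.
-/

open MeasureTheory Set Real

theorem integral_Ioo_rpow_mul_one_sub_rpow {a b : ℝ} (ha : 0 < a) (hb : 0 < b) :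
    ∫ x in Ioo (0 : ℝ) 1, x ^ (a - 1) * (1 - x) ^ (b - 1)
      = Gamma a * Gamma b / Gamma (a + b) := by
  have hβ := Complex.betaIntegral_eq_Gamma_mul_div (a : ℂ) b (by simpa) (by simpa)
  have hofReal : Complex.betaIntegral a b
      = ((∫ x in (0 : ℝ)..1, x ^ (a - 1) * (1 - x) ^ (b - 1) : ℝ) : ℂ) := by
    rw [Complex.betaIntegral, ← intervalIntegral.integral_ofReal]
    refine intervalIntegral.integral_congr fun x hx => ?_
    rw [uIcc_of_le zero_le_one] at hx
    simp only [Complex.ofReal_mul, Complex.ofReal_cpow hx.1,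
      Complex.ofReal_cpow (sub_nonneg.2 hx.2)]
    push_cast
    rfl
  rw [hofReal, ← Complex.ofReal_add, Complex.Gamma_ofReal, Complex.Gamma_ofReal,
    Complex.Gamma_ofReal, ← Complex.ofReal_mul, ← Complex.ofReal_div] at hβ
  rw [← Complex.ofReal_injective hβ, intervalIntegral.integral_of_le zero_le_one,
    integral_Ioc_eq_integral_Ioo]

theorem integral_Ioi_one_add_rpow_neg_mul_rpow {p q : ℝ} (hq : 0 < q) (hqp : q < p) :
    ∫ u in Ioi (0 : ℝ), (1 + u) ^ (-p) * u ^ (q - 1) = Gamma (p - q) * Gamma q / Gamma p := by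
  have hderiv :
      ∀ x ∈ Ioo (0 : ℝ) 1, HasDerivWithinAt (fun x => x⁻¹ - 1) (-(x ^ 2)⁻¹) (Ioo 0 1) x :=
    fun x hx => ((hasDerivAt_inv hx.1.ne').sub_const 1).hasDerivWithinAt
  have hinj : InjOn (fun x : ℝ => x⁻¹ - 1) (Ioo 0 1) := fun x hx y hy hxy => by
    simpa using hxy
  have himage : (fun x : ℝ => x⁻¹ - 1) '' Ioo 0 1 = Ioi 0 := by
    ext u
    constructor
    · rintro ⟨x, hx, rfl⟩
      simpa using (one_lt_inv₀ hx.1).2 hx.2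
    · intro hu
      have h1u : 1 < 1 + u := lt_add_of_pos_right 1 hu
      exact ⟨(1 + u)⁻¹, ⟨inv_pos.2 (zero_lt_one.trans h1u), inv_lt_one_of_one_lt₀ h1u⟩, by simp⟩
  have hβ := integral_Ioo_rpow_mul_one_sub_rpow (sub_pos.2 hqp) hq
  rw [sub_add_cancel] at hβ
  rw [← himage, integral_image_eq_integral_abs_deriv_smul measurableSet_Ioo hderiv hinj, ← hβ]
  refine setIntegral_congr_fun measurableSet_Ioo fun x hx => ?_
  have hx0 := hx.1
  have h1x : 0 < 1 - x := sub_pos.2 hx.2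
  have hsub : x⁻¹ - 1 = (1 - x) / x := by field_simp
  rw [smul_eq_mul, abs_neg, abs_inv, abs_of_pos (by positivity : 0 < x ^ 2), add_sub_cancel,
    inv_rpow hx0.le, rpow_neg hx0.le, inv_inv, hsub, div_rpow h1x.le hx0.le,
    show p - q - 1 = p - (q - 1) - 2 by ring, rpow_sub hx0 _ 2, rpow_sub hx0 p, rpow_two]
  ring

theorem integral_Ioi_add_mul_rpow_neg_mul_rpow {A c p q : ℝ} (hA : 0 < A) (hc : 0 < c)
    (hq : 0 < q) (hqp : q < p) :
    ∫ u in Ioi (0 : ℝ), (A + c * u) ^ (-p) * u ^ (q - 1)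
      = A ^ (q - p) * c ^ (-q) * (Gamma (p - q) * Gamma q / Gamma p) := by
  have hAc : 0 < A / c := by positivity
  have hscale := integral_comp_mul_left_Ioi (fun u => (A + c * u) ^ (-p) * u ^ (q - 1)) 0 hAc
  rw [mul_zero, smul_eq_mul, eq_inv_mul_iff_mul_eq₀ hAc.ne'] at hscale
  rw [← hscale, ← integral_Ioi_one_add_rpow_neg_mul_rpow hq hqp, ← integral_const_mul,
    ← integral_const_mul]
  refine setIntegral_congr_fun measurableSet_Ioi fun v hv => ?_
  have hv0 : 0 < v := hv
  have hAv : A + c * (A / c * v) = A * (1 + v) := by field_simp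
  rw [hAv, mul_rpow hA.le (by positivity : (0 : ℝ) ≤ 1 + v), mul_rpow hAc.le hv0.le,
    rpow_sub_one hAc.ne', div_rpow hA.le hc.le, sub_eq_add_neg q p, rpow_add hA, rpow_neg hc.le]
  field_simp

theorem integral_Ioi_comp_sq_sub_sq {E : Type*} [NormedAddCommGroup E] [NormedSpace ℝ E]
    {a : ℝ} (ha : 0 ≤ a) (g : ℝ → E) :
    ∫ r in Ioi a, (2 * r) • g (r ^ 2 - a ^ 2) = ∫ u in Ioi 0, g u := by
  have hderiv : ∀ r ∈ Ioi a, HasDerivWithinAt (fun r => r ^ 2 - a ^ 2) (2 * r) (Ioi a) r :=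
    fun r _ => by simpa using ((hasDerivAt_pow 2 r).sub_const (a ^ 2)).hasDerivWithinAt
  have hinj : InjOn (fun r => r ^ 2 - a ^ 2) (Ioi a) := fun x hx y hy hxy =>
    (pow_left_strictMonoOn₀ two_ne_zero).injOn (ha.trans (le_of_lt hx) : 0 ≤ x)
      (ha.trans (le_of_lt hy) : 0 ≤ y) (sub_left_inj.1 hxy)
  have himage : (fun r => r ^ 2 - a ^ 2) '' Ioi a = Ioi 0 := by
    ext u
    refine ⟨fun ⟨r, hr, hru⟩ => hru ▸ sub_pos.2 (pow_lt_pow_left₀ hr ha two_ne_zero),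
      fun hu => ⟨√(u + a ^ 2), (lt_sqrt ha).2 (lt_add_of_pos_left _ hu), ?_⟩⟩
    simp [sq_sqrt (add_nonneg (le_of_lt hu) (sq_nonneg a))]
  rw [← himage, integral_image_eq_integral_abs_deriv_smul measurableSet_Ioi hderiv hinj]
  refine setIntegral_congr_fun measurableSet_Ioi fun r hr => ?_
  rw [abs_of_pos (by linarith [mem_Ioi.1 hr] : 0 < 2 * r)]

theorem stmt_18_general (n m : ℕ) (hm : 2 ≤ m) (s B ξ : ℝ) (hs : 0 < s) (hB : 0 < B) :
    (2 * Real.pi ^ (((m : ℝ) - 1) / 2) / Real.Gamma (((m : ℝ) - 1) / 2)) *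
        ∫ r in Set.Ioi |ξ|,
          (B + 16 * r ^ 2) ^ (-(((n : ℝ) + m + s) / 2)) *
            (r ^ 2 - ξ ^ 2) ^ (((m : ℝ) - 3) / 2) * r
      = (Real.pi ^ (((m : ℝ) - 1) / 2) / 4 ^ (m - 1)) *
          (Real.Gamma (((n : ℝ) + 1 + s) / 2) / Real.Gamma (((n : ℝ) + m + s) / 2)) *
          (B + 16 * ξ ^ 2) ^ (-(((n : ℝ) + 1 + s) / 2)) := by
  set q : ℝ := ((m : ℝ) - 1) / 2 with hq_def
  set p : ℝ := ((n : ℝ) + m + s) / 2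
  set A : ℝ := B + 16 * ξ ^ 2
  have hm' : (2 : ℝ) ≤ m := by exact_mod_cast hm
  have hq : 0 < q := by rw [hq_def]; linarith
  have hpq : p - q = ((n : ℝ) + 1 + s) / 2 := by ring
  have hqp : q < p := by linarith [n.cast_nonneg (α := ℝ)]
  have h2q : ((2 : ℕ) : ℝ) * q = ((m - 1 : ℕ) : ℝ) := by
    push_cast [Nat.cast_sub (one_le_two.trans hm)]; ring
  have h16 : (16 : ℝ) ^ (-q) = ((4 : ℝ) ^ (m - 1))⁻¹ := by
    rw [rpow_neg (by norm_num), show (16 : ℝ) = 4 ^ 2 by norm_num,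
      ← rpow_natCast_mul (by norm_num), h2q, rpow_natCast]
  set g : ℝ → ℝ := fun u => (A + 16 * u) ^ (-p) * u ^ (q - 1)
  have hintegrand (r : ℝ) :
      (B + 16 * r ^ 2) ^ (-p) * (r ^ 2 - ξ ^ 2) ^ (((m : ℝ) - 3) / 2) * r
        = 2⁻¹ * ((2 * r) • g (r ^ 2 - |ξ| ^ 2)) := by
    simp only [g, sq_abs, smul_eq_mul]
    rw [show A + 16 * (r ^ 2 - ξ ^ 2) = B + 16 * r ^ 2 by ring,
      show ((m : ℝ) - 3) / 2 = q - 1 by ring]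
    ring
  simp_rw [hintegrand]
  rw [integral_const_mul, integral_Ioi_comp_sq_sub_sq (abs_nonneg ξ) g,
    integral_Ioi_add_mul_rpow_neg_mul_rpow (by positivity) (by norm_num) hq hqp, h16, hpq,
    show q - p = -(((n : ℝ) + 1 + s) / 2) by rw [← hpq]; ring]
  have hΓq : Gamma q ≠ 0 := (Gamma_pos_of_pos hq).ne'
  field_simp

/-- the Abel-type integral identity expressing the partial Radon transform
of the H-type kernel as a constant multiple of the Heisenberg kernel. -/
theorem stmt_18 (n m : ℕ) (hn : 1 ≤ n) (hm : 2 ≤ m) (s B ξ : ℝ) (hs : 0 < s) (hB : 0 < B) :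
    (2 * Real.pi ^ (((m : ℝ) - 1) / 2) / Real.Gamma (((m : ℝ) - 1) / 2)) *
        ∫ r in Set.Ioi |ξ|,
          (B + 16 * r ^ 2) ^ (-(((n : ℝ) + m + s) / 2)) *
            (r ^ 2 - ξ ^ 2) ^ (((m : ℝ) - 3) / 2) * r
      = (Real.pi ^ (((m : ℝ) - 1) / 2) / 4 ^ (m - 1)) *
          (Real.Gamma (((n : ℝ) + 1 + s) / 2) / Real.Gamma (((n : ℝ) + m + s) / 2)) *
          (B + 16 * ξ ^ 2) ^ (-(((n : ℝ) + 1 + s) / 2)) :=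
  stmt_18_general n m hm s B ξ hs hB
end
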